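/- arXiv:2312.08105 — 2 statements merged into one kernel-verified Lean document; each statement's English description precedes it below -/
import Mathlib

section
/- Let R(θ) = exp(θ(τ − τ†)) be a fermionic excitation rotation, and suppose that after the Jordan–Wigner transformation τ = ± Q_{p_1}† ⋯ Q_{p_r}† Q_{p_{r+1}} ⋯ Q_{p_{2r}} ∏_{i∈V} Z_i for some index set V ⊆ {1,…,n} \ {p_1,…,p_{2r}}. Define τ' := Q_{p_1}† ⋯ Q_{p_r}† Q_{p_{r+1}} ⋯ Q_{p_{2r}} and R'(θ) := exp(θ(τ' − (τ')†)). For any computational basis state |Φ⟩ of (ℂ^{2^{2t}})^{⊗n} (site decomposition), let z⃗ := ⊕_{a∈V} Φ_a ∈ 𝔽₂^{2t} and let X_i^{z⃗} := ⊗_{j=1}^{2t} X^{z_j} act on site i. Then ⟨R⟩_t |Φ⟩ = (∏_{i=1}^n X_i^{z⃗}) ⟨R'⟩_t (∏_{i=1}^n X_i^{z⃗}) |Φ⟩. -/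
open MeasureTheory Matrix Finset Filter

noncomputable section

namespace DUCC

attribute [local instance] Classical.propDecidable

/-- The space of `n`-qubit operators: `2^n × 2^n` complex matrices, indexed by
bit strings `Fin n → Fin 2`. -/
abbrev QMat (n : ℕ) := Matrix (Fin n → Fin 2) (Fin n → Fin 2) ℂ

/-- The space of `n`-qubit states. -/
abbrev QVec (n : ℕ) := (Fin n → Fin 2) → ℂ

/-- The 2×2 matrix `Q = |0⟩⟨1|`. -/
def Qmat : Matrix (Fin 2) (Fin 2) ℂ := fun i j => if i = 0 ∧ j = 1 then 1 else 0

/-- `Q† = |1⟩⟨0|`. -/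
def Qd : Matrix (Fin 2) (Fin 2) ℂ := Qmatᴴ

/-- Embed a single-qubit operator `M` at qubit `p` (i.e. `M_p = I ⊗ ⋯ ⊗ M ⊗ ⋯ ⊗ I`). -/
def embed (n : ℕ) (M : Matrix (Fin 2) (Fin 2) ℂ) (p : Fin n) : QMat n :=
  fun x y => (if ∀ a, a ≠ p → x a = y a then 1 else 0) * M (x p) (y p)

/-- A string of Pauli-`Z` operators over the index set `S`. -/
def Zstr (n : ℕ) (S : Finset (Fin n)) : QMat n :=
  Matrix.diagonal fun x => ∏ a ∈ S, (if x a = 1 then (-1 : ℂ) else 1)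

/-- The Jordan–Wigner annihilation operator `â_p = Q_p ∏_{a<p} Z_a`. -/
def aop (n : ℕ) (p : Fin n) : QMat n :=
  Zstr n (Finset.univ.filter fun a => a < p) * embed n Qmat p

/-- Ordered product of finitely many matrices (or monoid elements). -/
def finProd {α : Type*} [Monoid α] (r : ℕ) (f : Fin r → α) : α :=
  ((List.finRange r).map f).prod

/-- The qubit excitation operator `Q_{c 1}† ⋯ Q_{c r}† Q_{d 1} ⋯ Q_{d r}`. -/
def qubitExc (n r : ℕ) (c d : Fin r → Fin n) : QMat n :=
  finProd r (fun i => embed n Qd (c i)) * finProd r (fun i => embed n Qmat (d i))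

/-- The fermionic excitation operator `â_{c 1}† ⋯ â_{c r}† â_{d 1} ⋯ â_{d r}`. -/
def fermExc (n r : ℕ) (c d : Fin r → Fin n) : QMat n :=
  finProd r (fun i => (aop n (c i))ᴴ) * finProd r (fun i => aop n (d i))

/-- The rotation `R(θ) = exp (θ (τ - τ†))` generated by an operator `τ`. -/
def excRot {n : ℕ} (τ : QMat n) (θ : ℝ) : QMat n :=
  NormedSpace.exp ((θ : ℂ) • (τ - τᴴ))

/-- `τ` is a (qubit or fermionic) excitation operator. -/
def IsExcitationOp {n : ℕ} (τ : QMat n) : Prop :=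
  ∃ (r : ℕ) (c : Fin r → Fin n) (d : Fin r → Fin n), 0 < r ∧
    Function.Injective (Sum.elim c d) ∧
    (τ = qubitExc n r c d ∨ τ = fermExc n r c d)

/-- `R` is a (qubit) excitation rotation. -/
def IsExcRotation {n : ℕ} (R : ℝ → QMat n) : Prop :=
  ∃ τ : QMat n, IsExcitationOp τ ∧ ∀ θ, R θ = excRot τ θ

/-- The Hartree–Fock state `|1…10…0⟩` with `η` electrons. -/
def psi0 (n η : ℕ) : QVec n :=
  fun x => if ∀ i : Fin n, (x i = 1 ↔ (i : ℕ) < η) then 1 else 0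

/-- The rank-one projector `|v⟩⟨v|`. -/
def ketbra {n : ℕ} (v : QVec n) : QMat n := fun x y => v x * star (v y)

/-- The alternated dUCC ansatz `U^R⃗_k(θ⃗) = ∏_{i=1}^k ∏_{j=1}^m R_j(θ_j^{(i)})`. -/
def ansatz {n : ℕ} (m k : ℕ) (R : Fin m → ℝ → QMat n) (θ : Fin k × Fin m → ℝ) : QMat n :=
  finProd k (fun i => finProd m (fun j => R j (θ (i, j))))

/-- The cost function `C(θ⃗; O) = tr (O U(θ⃗) |ψ₀⟩⟨ψ₀| U(θ⃗)†)`. -/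
def costFn {n : ℕ} (η m k : ℕ) (R : Fin m → ℝ → QMat n) (O : QMat n)
    (θ : Fin k × Fin m → ℝ) : ℝ :=
  (O * ansatz m k R θ * ketbra (psi0 n η) * (ansatz m k R θ)ᴴ).trace.re

/-- Expectation of `f` with `θ⃗` uniform on `[0, 2π)^ι`. -/
def uExp {ι : Type*} [Fintype ι] (f : (ι → ℝ) → ℝ) : ℝ :=
  (1 / (2 * Real.pi)) ^ (Fintype.card ι) *
    ∫ θ in Set.pi Set.univ fun _ : ι => Set.Ico (0 : ℝ) (2 * Real.pi), f θ

/-- Variance of `f` with `θ⃗` uniform on `[0, 2π)^ι`. -/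
def uVar {ι : Type*} [Fintype ι] (f : (ι → ℝ) → ℝ) : ℝ :=
  uExp (fun θ => (f θ - uExp f) ^ 2)

/-- The partial derivative of `f` in the coordinate `x`. -/
def pderiv {ι : Type*} (f : (ι → ℝ) → ℝ) (x : ι) (θ : ι → ℝ) : ℝ :=
  deriv (fun s => f (Function.update θ x s)) (θ x)

/-- `(â_p† â_q + h.c.)`. -/
def singleHerm (n : ℕ) (p q : Fin n) : QMat n :=
  (aop n p)ᴴ * aop n q + ((aop n p)ᴴ * aop n q)ᴴ

/-- `(â_p† â_q† â_r â_s + h.c.)`. -/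
def doubleHerm (n : ℕ) (p q r s : Fin n) : QMat n :=
  (aop n p)ᴴ * (aop n q)ᴴ * aop n r * aop n s +
    ((aop n p)ᴴ * (aop n q)ᴴ * aop n r * aop n s)ᴴ

/-- The electronic structure Hamiltonian. -/
def Hel (n : ℕ) (h : Fin n → Fin n → ℝ) (g : Fin n → Fin n → Fin n → Fin n → ℝ) : QMat n :=
  (∑ p : Fin n, ∑ q : Fin n, if q < p then (h p q : ℂ) • singleHerm n p q else 0) +
  ∑ p : Fin n, ∑ q : Fin n, ∑ r : Fin n, ∑ s : Fin n,
    if s < r ∧ r < q ∧ q < p then (g p q r s : ℂ) • doubleHerm n p q r s else 0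

/-! ### The enlarged space of `2t` replicas -/

/-- Matrices on the `2t`-fold replicated space `(ℂ^{2^n})^{⊗2t}`. -/
abbrev BigMat (n t : ℕ) := Matrix (Fin (2*t) → Fin n → Fin 2) (Fin (2*t) → Fin n → Fin 2) ℂ

/-- Vectors on the `2t`-fold replicated space. -/
abbrev BigVec (n t : ℕ) := (Fin (2*t) → Fin n → Fin 2) → ℂ

/-- `A^{⊗t} ⊗ conj(A)^{⊗t}`. -/
def momentKron {n : ℕ} (t : ℕ) (A : QMat n) : BigMat n t :=
  fun x y => ∏ j : Fin (2*t), if (j : ℕ) < t then A (x j) (y j) else star (A (x j) (y j))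

/-- The `t`-th moment superoperator `⟨R⟩_t = (1/2π) ∫₀^{2π} R(θ)^{⊗t} ⊗ conj(R(θ))^{⊗t} dθ`. -/
def momentSOp {n : ℕ} (t : ℕ) (R : ℝ → QMat n) : BigMat n t :=
  fun x y => (1 / (2 * Real.pi) : ℂ) *
    ∫ θ in Set.Ico (0 : ℝ) (2 * Real.pi), momentKron t (R θ) x y

/-- `|ψ₀⟩^{⊗2t}`. -/
def psi0pow (n η t : ℕ) : BigVec n t := fun x => ∏ j : Fin (2*t), psi0 n η (x j)

/-- The `(R⃗,t,k)`-moment vector `|Ψ^R⃗_{t,k}⟩ = (∏_j ⟨R_j⟩_t)^k |ψ₀⟩^{⊗2t}`. -/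
def momentVec {n : ℕ} (t m : ℕ) (R : Fin m → ℝ → QMat n) (η k : ℕ) : BigVec n t :=
  ((finProd m fun j => momentSOp t (R j)) ^ k).mulVec (psi0pow n η t)

/-- A site (all `2t` replicas of qubit `i`) has even Hamming weight everywhere. -/
def evenState {n t : ℕ} (x : Fin (2*t) → Fin n → Fin 2) : Prop :=
  ∀ i : Fin n, Even (Finset.univ.filter fun j : Fin (2*t) => x j i = 1).card

/-- Membership in `H^even_t`: the span of the computational basis states in which
every site has even Hamming weight. -/
def memHeven {n t : ℕ} (v : BigVec n t) : Prop := ∀ x, ¬ evenState x → v x = 0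

/-- `Z_p^{⊗2t}`: Pauli-`Z` on qubit `p` in each of the `2t` replicas. -/
def ZpPow {n : ℕ} (t : ℕ) (p : Fin n) : BigMat n t :=
  Matrix.diagonal fun x => ∏ j : Fin (2*t), (if x j p = 1 then (-1 : ℂ) else 1)

/-- The unitary permuting the `2t` replicas according to `σ`. -/
def replicaPerm {n t : ℕ} (σ : Equiv.Perm (Fin (2*t))) : BigMat n t :=
  fun x y => if ∀ j, x j = y (σ j) then 1 else 0

/-- The unitary permuting the `n` sites according to `π`. -/
def sitePermOp {n t : ℕ} (π : Equiv.Perm (Fin n)) : BigMat n t :=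
  fun x y => if ∀ j i, x j (π i) = y j i then 1 else 0

/-- The computational basis vector `|Φ⟩` of the replicated space. -/
def basisVec {n t : ℕ} (x : Fin (2*t) → Fin n → Fin 2) : BigVec n t :=
  fun y => if y = x then 1 else 0

/-! ### Single and double (qubit) excitation rotations -/

/-- `T = Q_p† Q_q`. -/
def singleT (n : ℕ) (p q : Fin n) : QMat n := embed n Qd p * embed n Qmat q

/-- `T = Q_p† Q_q† Q_r Q_s`. -/
def doubleT (n : ℕ) (p q r s : Fin n) : QMat n :=
  embed n Qd p * embed n Qd q * embed n Qmat r * embed n Qmat s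

/-- The open interval `(q, p)` of qubit indices. -/
def Zioo (n : ℕ) (q p : Fin n) : Finset (Fin n) :=
  Finset.univ.filter fun a => q < a ∧ a < p

/-- The qubit single excitation rotation `A^qubit_{pq}(θ)`. -/
def AqubitRot (n : ℕ) (p q : Fin n) (θ : ℝ) : QMat n :=
  NormedSpace.exp ((θ : ℂ) • (singleT n p q - (singleT n p q)ᴴ))

/-- The single excitation rotation `A_{pq}(θ)`. -/
def ARot (n : ℕ) (p q : Fin n) (θ : ℝ) : QMat n :=
  NormedSpace.exp ((θ : ℂ) • ((singleT n p q - (singleT n p q)ᴴ) * Zstr n (Zioo n q p)))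

/-- The qubit double excitation rotation `B^qubit_{pqrs}(θ)`. -/
def BqubitRot (n : ℕ) (p q r s : Fin n) (θ : ℝ) : QMat n :=
  NormedSpace.exp ((θ : ℂ) • (doubleT n p q r s - (doubleT n p q r s)ᴴ))

/-- The double excitation rotation `B_{pqrs}(θ)`. -/
def BRot (n : ℕ) (p q r s : Fin n) (θ : ℝ) : QMat n :=
  NormedSpace.exp ((θ : ℂ) •
    ((doubleT n p q r s - (doubleT n p q r s)ᴴ) * Zstr n (Zioo n s r ∪ Zioo n q p)))

/-! ### Paired states at `t = 2` -/

/-- Site `i` of `x` is in state `|I_{ab}⟩ = |a,a,b,b⟩`. -/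
def siteIsI {n : ℕ} (x : Fin (2*2) → Fin n → Fin 2) (i : Fin n) (a b : Fin 2) : Prop :=
  x ⟨0, by omega⟩ i = a ∧ x ⟨1, by omega⟩ i = a ∧ x ⟨2, by omega⟩ i = b ∧ x ⟨3, by omega⟩ i = b

/-- Site `i` of `x` is in state `|X_{ab}⟩ = |a,ā,b,b̄⟩`. -/
def siteIsX {n : ℕ} (x : Fin (2*2) → Fin n → Fin 2) (i : Fin n) (a b : Fin 2) : Prop :=
  x ⟨0, by omega⟩ i = a ∧ x ⟨1, by omega⟩ i = a + 1 ∧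
  x ⟨2, by omega⟩ i = b ∧ x ⟨3, by omega⟩ i = b + 1

/-- Number of sites of `x` in state `|I_{ab}⟩`. -/
def nI {n : ℕ} (x : Fin (2*2) → Fin n → Fin 2) (a b : Fin 2) : ℕ :=
  (Finset.univ.filter fun i : Fin n => siteIsI x i a b).card

/-- Number of sites of `x` in state `|X_{ab}⟩`. -/
def nX {n : ℕ} (x : Fin (2*2) → Fin n → Fin 2) (a b : Fin 2) : ℕ :=
  (Finset.univ.filter fun i : Fin n => siteIsX x i a b).card

/-- `x` is a paired state (with `η` electrons). -/
def pairedState {n : ℕ} (η : ℕ) (x : Fin (2*2) → Fin n → Fin 2) : Prop :=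
  (∀ i : Fin n, (∃ a b, siteIsI x i a b) ∨ (∃ a b, siteIsX x i a b)) ∧
  nI x 0 1 = nI x 1 0 ∧ nX x 0 0 = nX x 1 1 ∧ nX x 0 1 = nX x 1 0 ∧
  (nI x 0 0 : ℤ) - (nI x 1 1 : ℤ) = (n : ℤ) - 2 * (η : ℤ)

/-- Membership in `H^paired_2`: the span of all paired states. -/
def memPaired {n : ℕ} (η : ℕ) (v : (Fin (2*2) → Fin n → Fin 2) → ℂ) : Prop :=
  ∀ x, ¬ pairedState η x → v x = 0

/-- The color of site `i`: `some 0` (red) for `I_{01},I_{10}`, `some 1` (green) for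
`X_{00},X_{11}`, `some 2` (blue) for `X_{01},X_{10}`, `none` for `I_{00},I_{11}`. -/
def siteColor {n : ℕ} (x : Fin (2*2) → Fin n → Fin 2) (i : Fin n) : Option (Fin 3) :=
  if siteIsI x i 0 1 ∨ siteIsI x i 1 0 then some 0
  else if siteIsX x i 0 0 ∨ siteIsX x i 1 1 then some 1
  else if siteIsX x i 0 1 ∨ siteIsX x i 1 0 then some 2
  else none

/-- The crossing number of a paired state. -/
def crossNum {n : ℕ} (x : Fin (2*2) → Fin n → Fin 2) : ℕ :=
  (Finset.univ.filter fun q : Fin n × Fin n × Fin n × Fin n =>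
    q.1 < q.2.1 ∧ q.2.1 < q.2.2.1 ∧ q.2.2.1 < q.2.2.2 ∧
    siteColor x q.1 ≠ siteColor x q.2.1 ∧
    siteColor x q.1 = siteColor x q.2.2.1 ∧ siteColor x q.1 ≠ none ∧
    siteColor x q.2.1 = siteColor x q.2.2.2 ∧ siteColor x q.2.1 ≠ none).card

/-- Swap sites `u` and `v`. -/
def swapSites {n t : ℕ} (u v : Fin n) (x : Fin (2*t) → Fin n → Fin 2) :
    Fin (2*t) → Fin n → Fin 2 :=
  fun j i => x j (Equiv.swap u v i)

/-- Flip the bits in positions `W` of sites `u` and `v`. -/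
def flipSites {n t : ℕ} (u v : Fin n) (W : Finset (Fin (2*t)))
    (x : Fin (2*t) → Fin n → Fin 2) : Fin (2*t) → Fin n → Fin 2 :=
  fun j i => if (i = u ∨ i = v) ∧ j ∈ W then x j i + 1 else x j i

/-- `z⃗ = ⊕_{u<a<v} Φ_a`, the XOR of the site strings strictly between `u` and `v`. -/
def zIoo {n t : ℕ} (u v : Fin n) (x : Fin (2*t) → Fin n → Fin 2) : Fin (2*t) → Fin 2 :=
  fun j => ∑ a ∈ Finset.univ.filter (fun a : Fin n => u < a ∧ a < v), x j a

/-- `a ⊙ b = Σ_j a_j b_j` as a natural number. -/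
def bitDot {t : ℕ} (a b : Fin (2*t) → Fin 2) : ℕ := ∑ j, ((a j : ℕ) * (b j : ℕ))



/-- The operator `∏_{i=1}^n X_i^{z⃗}` flipping, in each replica `j` with `z_j = 1`,
all the qubits. -/
def flipOp {n t : ℕ} (z : Fin (2*t) → Fin 2) : BigMat n t :=
  fun x y => if ∀ j i, x j i = y j i + z j then 1 else 0

/-- `z⃗ = ⊕_{a ∈ V} Φ_a`: the XOR over `V` of the site strings of `Φ`. -/
def zV {n t : ℕ} (V : Finset (Fin n)) (x : Fin (2*t) → Fin n → Fin 2) :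
    Fin (2*t) → Fin 2 :=
  fun j => ∑ a ∈ V, x j a

/-! ### Auxiliary lemmas -/

open NormedSpace in
set_option maxHeartbeats 1000000 in
theorem exp_idem {m : Type*} [Fintype m] [DecidableEq m] (c : ℂ) (P : Matrix m m ℂ)
    (hP : P * P = P) :
    NormedSpace.exp (c • P) = 1 + (Complex.exp c - 1) • P := by
  letI : SeminormedRing (Matrix m m ℂ) := Matrix.linftyOpSemiNormedRing
  letI : NormedRing (Matrix m m ℂ) := Matrix.linftyOpNormedRing
  letI : NormedAlgebra ℂ (Matrix m m ℂ) := Matrix.linftyOpNormedAlgebra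
  have hPpow : ∀ k : ℕ, P ^ (k + 1) = P := by
    intro k; induction k with
    | zero => simp
    | succ k ih => rw [pow_succ, ih, hP]
  have hsumC : Summable (fun n : ℕ => ((n.factorial : ℂ))⁻¹ • c ^ n) :=
    expSeries_summable' (𝕂 := ℂ) c
  have hsumC1 : Summable (fun k : ℕ => (((k+1).factorial : ℂ))⁻¹ • c ^ (k+1)) :=
    (summable_nat_add_iff 1).2 hsumC
  have hexpc : Complex.exp c = 1 + ∑' k : ℕ, (((k+1).factorial : ℂ))⁻¹ • c ^ (k+1) := by
    rw [Complex.exp_eq_exp_ℂ]; simp only [exp_eq_tsum ℂ]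
    rw [hsumC.tsum_eq_zero_add]
    simp
  have hM : Summable (fun n : ℕ => ((n.factorial : ℂ))⁻¹ • (c • P) ^ n) :=
    expSeries_summable' (𝕂 := ℂ) (c • P)
  simp only [exp_eq_tsum ℂ]; rw [hM.tsum_eq_zero_add]
  have h1 : ∀ k : ℕ, (((k+1).factorial : ℂ))⁻¹ • (c • P) ^ (k+1)
      = ((((k+1).factorial : ℂ))⁻¹ • c ^ (k+1)) • P := by
    intro k
    rw [smul_pow, hPpow, smul_smul, smul_eq_mul]
  simp only [h1]
  rw [hsumC1.tsum_smul_const]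
  have : (∑' k : ℕ, (((k+1).factorial : ℂ))⁻¹ • c ^ (k+1)) = Complex.exp c - 1 := by
    rw [hexpc]; ring
  rw [this]
  simp

open NormedSpace in
set_option maxHeartbeats 1000000 in
theorem exp_three {m : Type*} [Fintype m] [DecidableEq m] (B : Matrix m m ℂ)
    (hB : B * B * B = -B) (c : ℂ) :
    NormedSpace.exp (c • B) = 1 + Complex.sin c • B + (1 - Complex.cos c) • (B * B) := by
  have hBS : B * (B * B) = -B := by rw [← mul_assoc, hB]
  have hSS : (B * B) * (B * B) = -(B * B) := by rw [← mul_assoc, hB, neg_mul]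
  set a : ℂ := -(1/2 : ℂ) with ha
  set b : ℂ := -(Complex.I/2) with hb
  set b' : ℂ := Complex.I/2 with hb'
  have expand : ∀ u v : ℂ, (a • (B*B) + u • B) * (a • (B*B) + v • B)
      = (u*v - a*a) • (B*B) + (-(a*v) - u*a) • B := by
    intro u v
    rw [add_mul, mul_add, mul_add, smul_mul_assoc, smul_mul_assoc, smul_mul_assoc, smul_mul_assoc,
      mul_smul_comm, mul_smul_comm, mul_smul_comm, mul_smul_comm, hSS, hB, hBS]
    module
  have hI : Complex.I * Complex.I = -1 := Complex.I_mul_I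
  have hs1 : b * b - a * a = a := by
    rw [ha, hb]; linear_combination ((1:ℂ)/4) * hI
  have hs2 : -(a*b) - b*a = b := by rw [ha]; ring
  have hs1' : b' * b' - a * a = a := by
    rw [ha, hb']; linear_combination ((1:ℂ)/4) * hI
  have hs2' : -(a*b') - b'*a = b' := by rw [ha]; ring
  have hPpPp : (a • (B*B) + b • B) * (a • (B*B) + b • B) = a • (B*B) + b • B := by
    rw [expand, hs1, hs2]
  have hPmPm : (a • (B*B) + b' • B) * (a • (B*B) + b' • B) = a • (B*B) + b' • B := by
    rw [expand, hs1', hs2']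
  have hz1 : b * b' - a * a = 0 := by rw [ha, hb, hb']; linear_combination (-(1:ℂ)/4) * hI
  have hz2 : -(a*b') - b*a = 0 := by rw [hb, hb']; ring
  have hz2' : -(a*b) - b'*a = 0 := by rw [hb, hb']; ring
  have hz1' : b' * b - a * a = 0 := by rw [ha, hb, hb']; linear_combination (-(1:ℂ)/4) * hI
  have hPpPm : (a • (B*B) + b • B) * (a • (B*B) + b' • B) = 0 := by
    rw [expand, hz1, hz2]; simp
  have hPmPp : (a • (B*B) + b' • B) * (a • (B*B) + b • B) = 0 := by
    rw [expand, hz1', hz2']; simp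
  have hdecomp : c • B = (c * Complex.I) • (a • (B*B) + b • B)
      + (-c * Complex.I) • (a • (B*B) + b' • B) := by
    have k1 : c * Complex.I * a + (-c * Complex.I) * a = 0 := by ring
    have k2 : c * Complex.I * b + (-c * Complex.I) * b' = c := by
      rw [hb, hb']; linear_combination (-c) * hI
    calc c • B = (c * Complex.I * a + (-c * Complex.I) * a) • (B*B)
          + (c * Complex.I * b + (-c * Complex.I) * b') • B := by rw [k1, k2]; simp
      _ = _ := by module
  have hcomm : Commute ((c * Complex.I) • (a • (B*B) + b • B))
      ((-c * Complex.I) • (a • (B*B) + b' • B)) := by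
    unfold Commute SemiconjBy
    rw [smul_mul_assoc, smul_mul_assoc, mul_smul_comm, mul_smul_comm, hPpPm, hPmPp]
    simp
  rw [hdecomp, Matrix.exp_add_of_commute _ _ hcomm,
    exp_idem _ _ hPpPp, exp_idem _ _ hPmPm]
  set u : ℂ := Complex.exp (c * Complex.I) - 1 with hu
  set v : ℂ := Complex.exp (-c * Complex.I) - 1 with hv
  have hfin : (1 + u • (a • (B*B) + b • B)) * (1 + v • (a • (B*B) + b' • B))
      = 1 + (u*b + v*b') • B + (u*a + v*a) • (B*B) := by
    rw [mul_add, mul_one, add_mul, one_mul, smul_mul_assoc, mul_smul_comm, hPpPm]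
    module
  rw [hfin]
  have c1 : u*b + v*b' = Complex.sin c := by
    rw [hu, hv, hb, hb', Complex.sin]; ring
  have c2 : u*a + v*a = 1 - Complex.cos c := by
    rw [hu, hv, ha, Complex.cos]; ring
  rw [c1, c2]

lemma finProd_zero {α : Type*} [Monoid α] (f : Fin 0 → α) : finProd 0 f = 1 := rfl

lemma finProd_succ {α : Type*} [Monoid α] (r : ℕ) (f : Fin (r+1) → α) :
    finProd (r+1) f = f 0 * finProd r (fun i => f i.succ) := by
  simp [finProd, List.finRange_succ, List.map_map, Function.comp_def]

lemma sum_delta {ι : Type*} [Fintype ι] [DecidableEq ι] (w : ι) (h : ι → ℂ) :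
    ∑ u, (if u = w then (1:ℂ) else 0) * h u = h w := by
  simp [ite_mul, Finset.sum_ite_eq']

lemma sum_delta' {ι : Type*} [Fintype ι] [DecidableEq ι] (w : ι) (h : ι → ℂ) :
    ∑ u, h u * (if u = w then (1:ℂ) else 0) = h w := by
  simp [mul_ite, Finset.sum_ite_eq']

lemma mul_boole_boole (A B : Prop) :
    (if A then (1:ℂ) else 0) * (if B then (1:ℂ) else 0) = if A ∧ B then (1:ℂ) else 0 := by
  by_cases hA : A <;> by_cases hB : B <;> simp [hA, hB]

lemma embed_apply_expand (n : ℕ) (M : Matrix (Fin 2) (Fin 2) ℂ) (q : Fin n)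
    (x u : Fin n → Fin 2) :
    embed n M q x u = ∑ bb : Fin 2, (if u = Function.update x q bb then 1 else 0) * M (x q) bb := by
  rw [Finset.sum_eq_single (u q)]
  · have : (u = Function.update x q (u q)) ↔ (∀ a, a ≠ q → x a = u a) := by
      constructor
      · intro h a ha
        conv_rhs => rw [h]
        simp [Function.update_of_ne ha]
      · intro h
        funext a
        rcases eq_or_ne a q with rfl | ha
        · simp
        · simp [Function.update_of_ne ha, (h a ha).symm]
    rw [embed]
    by_cases h : ∀ a, a ≠ q → x a = u a
    · rw [if_pos h, if_pos (this.2 h)]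
    · rw [if_neg h, if_neg (fun hc => h (this.1 hc))]
  · intro bb _ hbb
    have : u ≠ Function.update x q bb := by
      intro hc
      apply hbb
      rw [hc]
      simp
    rw [if_neg this, zero_mul]
  · intro h
    exact absurd (Finset.mem_univ _) h

lemma sum_collapse {ι : Type*} [Fintype ι] [DecidableEq ι] (Pp : Prop) [Decidable Pp] (w : ι) (h : ι → ℂ) :
    ∑ u, (if Pp ∧ u = w then (1:ℂ) else 0) * h u = if Pp then h w else 0 := by
  by_cases hP : Pp
  · simp only [hP, true_and, if_pos]
    exact sum_delta w h
  · simp [hP]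

lemma finProd_embed_apply (n : ℕ) (M : Matrix (Fin 2) (Fin 2) ℂ) :
    ∀ (r : ℕ) (p : Fin r → Fin n), Function.Injective p → ∀ x y : Fin n → Fin 2,
      finProd r (fun i => embed n M (p i)) x y =
        (if ∀ a, (∀ i, a ≠ p i) → x a = y a then 1 else 0) * ∏ i, M (x (p i)) (y (p i)) := by
  intro r
  induction r with
  | zero =>
    intro p _ x y
    rw [finProd_zero]
    have hiff : (∀ a, (∀ i : Fin 0, a ≠ p i) → x a = y a) ↔ x = y := by
      constructor
      · intro h; funext a; exact h a (fun i => i.elim0)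
      · intro h a _; rw [h]
    rw [Matrix.one_apply]
    by_cases h : x = y
    · rw [if_pos h, if_pos (hiff.2 h)]; simp
    · rw [if_neg h, if_neg (fun hc => h (hiff.1 hc))]; simp
  | succ r IH =>
    intro p hp x y
    have hps : Function.Injective (fun i : Fin r => p i.succ) :=
      fun i j hij => Fin.succ_injective r (hp hij)
    have h0s : ∀ i : Fin r, p i.succ ≠ p 0 := by
      intro i hc
      exact absurd (hp hc) (Fin.succ_ne_zero i)
    rw [finProd_succ, Matrix.mul_apply]
    have step1 : ∀ u : Fin n → Fin 2,
        embed n M (p 0) x u * finProd r (fun i => embed n M (p i.succ)) u y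
          = ∑ bb : Fin 2, (if u = Function.update x (p 0) bb then (1:ℂ) else 0) *
              (M (x (p 0)) bb * finProd r (fun i => embed n M (p i.succ)) u y) := by
      intro u
      rw [embed_apply_expand, Finset.sum_mul]
      exact Finset.sum_congr rfl fun bb _ => by ring
    rw [Finset.sum_congr rfl fun u _ => step1 u, Finset.sum_comm]
    have step2 : ∀ bb : Fin 2,
        (∑ u : Fin n → Fin 2, (if u = Function.update x (p 0) bb then (1:ℂ) else 0) *
          (M (x (p 0)) bb * finProd r (fun i => embed n M (p i.succ)) u y))
          = M (x (p 0)) bb *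
              finProd r (fun i => embed n M (p i.succ)) (Function.update x (p 0) bb) y := by
      intro bb
      exact sum_delta _ _
    rw [Finset.sum_congr rfl fun bb _ => step2 bb]
    have step3 : ∀ bb : Fin 2,
        finProd r (fun i => embed n M (p i.succ)) (Function.update x (p 0) bb) y
          = (if bb = y (p 0) ∧ (∀ a, (∀ i, a ≠ p i) → x a = y a) then (1:ℂ) else 0) *
              ∏ i : Fin r, M (x (p i.succ)) (y (p i.succ)) := by
      intro bb
      rw [IH _ hps]
      have hprod : ∀ i : Fin r,
          Function.update x (p 0) bb (p i.succ) = x (p i.succ) :=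
        fun i => Function.update_of_ne (h0s i) _ _
      have hcond : (∀ a, (∀ i : Fin r, a ≠ p i.succ) → Function.update x (p 0) bb a = y a)
          ↔ (bb = y (p 0) ∧ (∀ a, (∀ i, a ≠ p i) → x a = y a)) := by
        constructor
        · intro h
          constructor
          · have := h (p 0) (fun i => (h0s i).symm)
            simpa using this
          · intro a ha
            have ha0 : a ≠ p 0 := ha 0
            have := h a (fun i => ha i.succ)
            rwa [Function.update_of_ne ha0] at this
        · rintro ⟨hbb, hD⟩ a ha
          rcases eq_or_ne a (p 0) with rfl | ha0
          · simpa using hbb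
          · rw [Function.update_of_ne ha0]
            refine hD a ?_
            intro i
            refine Fin.cases ?_ ?_ i
            · exact ha0
            · exact fun j => ha j
      rw [Finset.prod_congr rfl fun i _ => congrArg₂ M (hprod i) rfl]
      congr 1
      by_cases h : ∀ a, (∀ i : Fin r, a ≠ p i.succ) → Function.update x (p 0) bb a = y a
      · rw [if_pos h, if_pos (hcond.1 h)]
      · rw [if_neg h, if_neg (fun hc => h (hcond.2 hc))]
    rw [Finset.sum_congr rfl fun bb _ => congrArg (M (x (p 0)) bb * ·) (step3 bb)]
    by_cases hD : ∀ a, (∀ i, a ≠ p i) → x a = y a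
    · have step4 : ∀ bb : Fin 2, M (x (p 0)) bb *
          ((if bb = y (p 0) ∧ (∀ a, (∀ i, a ≠ p i) → x a = y a) then (1:ℂ) else 0) *
            ∏ i : Fin r, M (x (p i.succ)) (y (p i.succ)))
          = (if bb = y (p 0) then (1:ℂ) else 0) *
              (M (x (p 0)) bb * ∏ i : Fin r, M (x (p i.succ)) (y (p i.succ))) := by
        intro bb
        rw [if_congr (and_iff_left hD) rfl rfl]; ring
      rw [Finset.sum_congr rfl fun bb _ => step4 bb, sum_delta, if_pos hD, Fin.prod_univ_succ]
      ring
    · have step4 : ∀ bb : Fin 2, M (x (p 0)) bb *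
          ((if bb = y (p 0) ∧ (∀ a, (∀ i, a ≠ p i) → x a = y a) then (1:ℂ) else 0) *
            ∏ i : Fin r, M (x (p i.succ)) (y (p i.succ))) = 0 := by
        intro bb
        rw [if_neg (fun hc => hD hc.2)]; ring
      rw [Finset.sum_congr rfl fun bb _ => step4 bb, if_neg hD]
      simp

/-- Flip the bits at positions in the ranges of `c` and `d`. -/
def flipCD (n r : ℕ) (c d : Fin r → Fin n) (x : Fin n → Fin 2) : Fin n → Fin 2 :=
  fun a => if (∃ i, a = c i) ∨ (∃ i, a = d i) then x a + 1 else x a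

/-- Occupation condition for `qubitExc` to act nontrivially. -/
def Pc (n r : ℕ) (c d : Fin r → Fin n) (x : Fin n → Fin 2) : Prop :=
  (∀ i, x (c i) = 1) ∧ (∀ i, x (d i) = 0)

/-- Occupation condition for `(qubitExc)ᴴ` to act nontrivially. -/
def Pc' (n r : ℕ) (c d : Fin r → Fin n) (x : Fin n → Fin 2) : Prop :=
  (∀ i, x (c i) = 0) ∧ (∀ i, x (d i) = 1)

/-- Intermediate state: zero out the bits in the range of `c`. -/
def psiC (n r : ℕ) (c : Fin r → Fin n) (x : Fin n → Fin 2) : Fin n → Fin 2 :=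
  fun a => if ∃ i, a = c i then 0 else x a

section EntryFormula

variable {n r : ℕ} {c d : Fin r → Fin n}

lemma psiC_c (x : Fin n → Fin 2) (i : Fin r) : psiC n r c x (c i) = 0 :=
  if_pos ⟨i, rfl⟩

lemma psiC_not (x : Fin n → Fin 2) (a : Fin n) (ha : ∀ i, a ≠ c i) : psiC n r c x a = x a :=
  if_neg (fun ⟨i, hi⟩ => ha i hi)

lemma flipCD_c (x : Fin n → Fin 2) (i : Fin r) :
    flipCD n r c d x (c i) = x (c i) + 1 :=
  if_pos (Or.inl ⟨i, rfl⟩)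

lemma flipCD_d (x : Fin n → Fin 2) (i : Fin r) :
    flipCD n r c d x (d i) = x (d i) + 1 :=
  if_pos (Or.inr ⟨i, rfl⟩)

lemma flipCD_not (x : Fin n → Fin 2) (a : Fin n) (hc : ∀ i, a ≠ c i) (hd : ∀ i, a ≠ d i) :
    flipCD n r c d x a = x a :=
  if_neg (fun h => h.elim (fun ⟨i, hi⟩ => hc i hi) (fun ⟨i, hi⟩ => hd i hi))

lemma inj_c (hinj : Function.Injective (Sum.elim c d)) : Function.Injective c := by
  intro i j h
  have := hinj (a₁ := Sum.inl i) (a₂ := Sum.inl j) (by simpa using h)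
  simpa using this

lemma inj_d (hinj : Function.Injective (Sum.elim c d)) : Function.Injective d := by
  intro i j h
  have := hinj (a₁ := Sum.inr i) (a₂ := Sum.inr j) (by simpa using h)
  simpa using this

lemma c_ne_d (hinj : Function.Injective (Sum.elim c d)) : ∀ i j, c i ≠ d j := by
  intro i j h
  have := hinj (a₁ := Sum.inl i) (a₂ := Sum.inr j) (by simpa using h)
  simp at this

lemma Qd_apply (a b : Fin 2) : Qd a b = if a = 1 ∧ b = 0 then 1 else 0 := by
  fin_cases a <;> fin_cases b <;>
    simp [Qd, Qmat, Matrix.conjTranspose_apply]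

lemma Qmat_apply (a b : Fin 2) : Qmat a b = if a = 0 ∧ b = 1 then 1 else 0 := rfl

lemma fin2_add_one_one : (1 : Fin 2) + 1 = 0 := by decide
lemma fin2_add_zero_one : (0 : Fin 2) + 1 = 1 := by decide

lemma qubitExc_apply (hinj : Function.Injective (Sum.elim c d)) (x y : Fin n → Fin 2) :
    qubitExc n r c d x y
      = if Pc n r c d x ∧ y = flipCD n r c d x then 1 else 0 := by
  have hci := inj_c hinj
  have hdi := inj_d hinj
  have hcd := c_ne_d hinj
  rw [qubitExc, Matrix.mul_apply]
  have hL : ∀ u, finProd r (fun i => embed n Qd (c i)) x u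
      = if (∀ i, x (c i) = 1) ∧ u = psiC n r c x then (1:ℂ) else 0 := by
    intro u
    rw [finProd_embed_apply n Qd r c hci x u]
    have hq : ∀ i : Fin r, Qd (x (c i)) (u (c i))
        = if x (c i) = 1 ∧ u (c i) = 0 then (1:ℂ) else 0 := fun i => Qd_apply _ _
    rw [Finset.prod_congr rfl fun i _ => hq i, Finset.prod_boole]
    have hiff : ((∀ a, (∀ i, a ≠ c i) → x a = u a) ∧ (∀ i ∈ Finset.univ, x (c i) = 1 ∧ u (c i) = 0))
        ↔ ((∀ i, x (c i) = 1) ∧ u = psiC n r c x) := by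
      simp only [Finset.mem_univ, true_implies]
      constructor
      · rintro ⟨hagree, hcu⟩
        refine ⟨fun i => (hcu i).1, ?_⟩
        funext a
        by_cases hac : ∃ i, a = c i
        · obtain ⟨i, rfl⟩ := hac
          rw [psiC_c]
          exact (hcu i).2
        · rw [psiC_not x a (fun i hi => hac ⟨i, hi⟩)]
          exact (hagree a (fun i hi => hac ⟨i, hi⟩)).symm
      · rintro ⟨h1, rfl⟩
        constructor
        · intro a ha
          exact (psiC_not x a ha).symm
        · intro i
          exact ⟨h1 i, psiC_c x i⟩
    by_cases hA : ∀ a, (∀ i, a ≠ c i) → x a = u a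
    · by_cases hB : ∀ i ∈ Finset.univ, x (c i) = 1 ∧ u (c i) = 0
      · rw [if_pos hA, if_pos hB, if_pos (hiff.1 ⟨hA, hB⟩), one_mul]
      · rw [if_neg hB, if_neg (fun hc => hB (hiff.2 hc).2), mul_zero]
    · rw [if_neg hA, if_neg (fun hc => hA (hiff.2 hc).1), zero_mul]
  have hsum : ∀ u, finProd r (fun i => embed n Qd (c i)) x u *
      finProd r (fun i => embed n Qmat (d i)) u y
      = (if (∀ i, x (c i) = 1) ∧ u = psiC n r c x then (1:ℂ) else 0) *
          finProd r (fun i => embed n Qmat (d i)) u y := by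
    intro u; rw [hL u]
  rw [Finset.sum_congr rfl fun u _ => hsum u, sum_collapse]
  have hpsid : ∀ i, psiC n r c x (d i) = x (d i) :=
    fun i => psiC_not x (d i) (fun j hj => hcd j i hj.symm)
  have hR : finProd r (fun i => embed n Qmat (d i)) (psiC n r c x) y
      = if (∀ a, (∀ i, a ≠ d i) → psiC n r c x a = y a) ∧
          (∀ i, x (d i) = 0 ∧ y (d i) = 1) then (1:ℂ) else 0 := by
    rw [finProd_embed_apply n Qmat r d hdi _ y]
    have hq : ∀ i : Fin r, Qmat (psiC n r c x (d i)) (y (d i))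
        = if x (d i) = 0 ∧ y (d i) = 1 then (1:ℂ) else 0 := by
      intro i
      rw [Qmat_apply, hpsid i]
    rw [Finset.prod_congr rfl fun i _ => hq i, Finset.prod_boole]
    have hiff : ((∀ a, (∀ i, a ≠ d i) → psiC n r c x a = y a) ∧
        (∀ i ∈ Finset.univ, x (d i) = 0 ∧ y (d i) = 1))
        ↔ ((∀ a, (∀ i, a ≠ d i) → psiC n r c x a = y a) ∧
            (∀ i, x (d i) = 0 ∧ y (d i) = 1)) := by
      simp
    by_cases hA : ∀ a, (∀ i, a ≠ d i) → psiC n r c x a = y a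
    · by_cases hB : ∀ i ∈ Finset.univ, x (d i) = 0 ∧ y (d i) = 1
      · rw [if_pos hA, if_pos hB, if_pos (hiff.1 ⟨hA, hB⟩), one_mul]
      · rw [if_neg hB, if_neg (fun hc => hB (hiff.2 hc).2), mul_zero]
    · rw [if_neg hA, if_neg (fun hc => hA (hiff.2 hc).1), zero_mul]
  rw [hR]
  have final : ((∀ i, x (c i) = 1) ∧ (∀ a, (∀ i, a ≠ d i) → psiC n r c x a = y a) ∧
      (∀ i, x (d i) = 0 ∧ y (d i) = 1)) ↔ (Pc n r c d x ∧ y = flipCD n r c d x) := by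
    constructor
    · rintro ⟨h1, hagree, hd2⟩
      refine ⟨⟨h1, fun i => (hd2 i).1⟩, ?_⟩
      funext a
      by_cases had : ∃ i, a = d i
      · obtain ⟨i, rfl⟩ := had
        rw [flipCD_d, (hd2 i).1, (hd2 i).2, fin2_add_zero_one]
      · by_cases hac : ∃ i, a = c i
        · obtain ⟨i, rfl⟩ := hac
          have hy : y (c i) = 0 := by
            have h := hagree (c i) (fun j hj => hcd i j hj)
            rw [psiC_c] at h
            exact h.symm
          rw [flipCD_c, h1 i, fin2_add_one_one, hy]
        · have hy : y a = x a := by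
            have h := hagree a (fun j hj => had ⟨j, hj⟩)
            rw [psiC_not x a (fun i hi => hac ⟨i, hi⟩)] at h
            exact h.symm
          rw [flipCD_not x a (fun i hi => hac ⟨i, hi⟩) (fun i hi => had ⟨i, hi⟩), hy]
    · rintro ⟨⟨h1, h2⟩, rfl⟩
      refine ⟨h1, ?_, ?_⟩
      · intro a ha
        by_cases hac : ∃ i, a = c i
        · obtain ⟨i, rfl⟩ := hac
          rw [psiC_c, flipCD_c, h1 i, fin2_add_one_one]
        · rw [psiC_not x a (fun i hi => hac ⟨i, hi⟩),
            flipCD_not x a (fun i hi => hac ⟨i, hi⟩) ha]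
      · intro i
        refine ⟨h2 i, ?_⟩
        rw [flipCD_d, h2 i, fin2_add_zero_one]
  by_cases h1 : ∀ i, x (c i) = 1
  · rw [if_pos h1]
    by_cases h2 : (∀ a, (∀ i, a ≠ d i) → psiC n r c x a = y a) ∧ (∀ i, x (d i) = 0 ∧ y (d i) = 1)
    · rw [if_pos h2, if_pos (final.1 ⟨h1, h2.1, h2.2⟩)]
    · rw [if_neg h2, if_neg (fun hc => h2 ⟨(final.2 hc).2.1, (final.2 hc).2.2⟩)]
  · rw [if_neg h1, if_neg (fun hc => h1 (final.2 hc).1)]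

end EntryFormula

/-- Global bit-flip. -/
def flAll (n : ℕ) (x : Fin n → Fin 2) : Fin n → Fin 2 := fun a => x a + 1

/-- Diagonal entries of a `Z`-string. -/
def zet (n : ℕ) (V : Finset (Fin n)) (x : Fin n → Fin 2) : ℂ :=
  ∏ a ∈ V, (if x a = 1 then (-1 : ℂ) else 1)

lemma Zstr_eq (n : ℕ) (V : Finset (Fin n)) : Zstr n V = Matrix.diagonal (zet n V) := rfl

lemma fin2_succ_succ (b : Fin 2) : b + 1 + 1 = b := by revert b; decide
lemma fin2_addone_eq_one {b : Fin 2} : b + 1 = 1 ↔ b = 0 := by revert b; decide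
lemma fin2_addone_eq_zero {b : Fin 2} : b + 1 = 0 ↔ b = 1 := by revert b; decide
lemma fin2_addone_inj {b c : Fin 2} : b + 1 = c + 1 ↔ b = c := by revert b c; decide
lemma fin2_ne_one {b : Fin 2} (h : b ≠ 1) : b = 0 := by revert b; decide
lemma fin2_one_or_zero (b : Fin 2) : b = 0 ∨ b = 1 := by revert b; decide

section MoreEntry

variable {n r : ℕ} {c d : Fin r → Fin n}

lemma flipCD_flipCD (x : Fin n → Fin 2) :
    flipCD n r c d (flipCD n r c d x) = x := by
  funext a
  unfold flipCD
  by_cases h : (∃ i, a = c i) ∨ (∃ i, a = d i)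
  · simp only [h, if_pos]
    exact fin2_succ_succ _
  · simp only [h, if_neg, if_false]

lemma eq_flipCD_comm {x y : Fin n → Fin 2} :
    y = flipCD n r c d x ↔ x = flipCD n r c d y := by
  constructor
  · rintro rfl; exact (flipCD_flipCD x).symm
  · rintro rfl; exact (flipCD_flipCD y).symm

lemma Pc_flipCD (x : Fin n → Fin 2) :
    Pc n r c d (flipCD n r c d x) ↔ Pc' n r c d x := by
  unfold Pc Pc'
  constructor
  · rintro ⟨h1, h2⟩
    refine ⟨fun i => ?_, fun i => ?_⟩
    · have := h1 i; rw [flipCD_c] at this; exact fin2_addone_eq_one.1 this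
    · have := h2 i; rw [flipCD_d] at this; exact fin2_addone_eq_zero.1 this
  · rintro ⟨h1, h2⟩
    refine ⟨fun i => ?_, fun i => ?_⟩
    · rw [flipCD_c, h1 i]; exact fin2_add_zero_one
    · rw [flipCD_d, h2 i]; exact fin2_add_one_one

lemma Pc'_flipCD (x : Fin n → Fin 2) :
    Pc' n r c d (flipCD n r c d x) ↔ Pc n r c d x := by
  constructor
  · intro h
    have := (Pc_flipCD (flipCD n r c d x)).2 h
    rwa [flipCD_flipCD] at this
  · intro h
    refine (Pc_flipCD (flipCD n r c d x)).1 ?_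
    rwa [flipCD_flipCD]

lemma qubitExcH_apply (hinj : Function.Injective (Sum.elim c d)) (x y : Fin n → Fin 2) :
    (qubitExc n r c d)ᴴ x y
      = if Pc' n r c d x ∧ y = flipCD n r c d x then 1 else 0 := by
  rw [Matrix.conjTranspose_apply, qubitExc_apply hinj y x]
  have hiff : (Pc n r c d y ∧ x = flipCD n r c d y) ↔
      (Pc' n r c d x ∧ y = flipCD n r c d x) := by
    constructor
    · rintro ⟨hp, hx⟩
      have hy : y = flipCD n r c d x := eq_flipCD_comm.2 hx
      subst hy
      exact ⟨(Pc_flipCD x).1 hp, rfl⟩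
    · rintro ⟨hp, hy⟩
      subst hy
      exact ⟨(Pc_flipCD x).2 hp, (flipCD_flipCD x).symm⟩
  by_cases h : Pc n r c d y ∧ x = flipCD n r c d y
  · rw [if_pos h, if_pos (hiff.1 h)]; exact star_one ℂ
  · rw [if_neg h, if_neg (fun hc => h (hiff.2 hc))]; exact star_zero ℂ

lemma qubitExc_mul_self (hinj : Function.Injective (Sum.elim c d)) (hr : 0 < r) :
    qubitExc n r c d * qubitExc n r c d = 0 := by
  ext x y
  rw [Matrix.mul_apply, Matrix.zero_apply]
  have hsum : ∀ u, qubitExc n r c d x u * qubitExc n r c d u y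
      = (if Pc n r c d x ∧ u = flipCD n r c d x then (1:ℂ) else 0) * qubitExc n r c d u y := by
    intro u; rw [qubitExc_apply hinj x u]
  rw [Finset.sum_congr rfl fun u _ => hsum u, sum_collapse]
  by_cases hP : Pc n r c d x
  · rw [if_pos hP, qubitExc_apply hinj]
    rw [if_neg]
    rintro ⟨⟨h1, _⟩, _⟩
    have h := h1 ⟨0, hr⟩
    rw [flipCD_c, hP.1 ⟨0, hr⟩, fin2_add_one_one] at h
    exact absurd h (by decide)
  · rw [if_neg hP]

lemma qubitExcH_mul_self (hinj : Function.Injective (Sum.elim c d)) (hr : 0 < r) :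
    (qubitExc n r c d)ᴴ * (qubitExc n r c d)ᴴ = 0 := by
  ext x y
  rw [Matrix.mul_apply, Matrix.zero_apply]
  have hsum : ∀ u, (qubitExc n r c d)ᴴ x u * (qubitExc n r c d)ᴴ u y
      = (if Pc' n r c d x ∧ u = flipCD n r c d x then (1:ℂ) else 0) *
        (qubitExc n r c d)ᴴ u y := by
    intro u; rw [qubitExcH_apply hinj x u]
  rw [Finset.sum_congr rfl fun u _ => hsum u, sum_collapse]
  by_cases hP : Pc' n r c d x
  · rw [if_pos hP, qubitExcH_apply hinj]
    rw [if_neg]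
    rintro ⟨⟨h1, _⟩, _⟩
    have h := h1 ⟨0, hr⟩
    rw [flipCD_c, hP.1 ⟨0, hr⟩, fin2_add_zero_one] at h
    exact absurd h (by decide)
  · rw [if_neg hP]

lemma qubitExc_mul_H (hinj : Function.Injective (Sum.elim c d)) :
    qubitExc n r c d * (qubitExc n r c d)ᴴ
      = Matrix.diagonal (fun x => if Pc n r c d x then 1 else 0) := by
  ext x y
  rw [Matrix.mul_apply]
  have hsum : ∀ u, qubitExc n r c d x u * (qubitExc n r c d)ᴴ u y
      = (if Pc n r c d x ∧ u = flipCD n r c d x then (1:ℂ) else 0) *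
          (qubitExc n r c d)ᴴ u y := by
    intro u; rw [qubitExc_apply hinj x u]
  rw [Finset.sum_congr rfl fun u _ => hsum u, sum_collapse,
    Matrix.diagonal_apply]
  by_cases hP : Pc n r c d x
  · rw [if_pos hP, qubitExcH_apply hinj, flipCD_flipCD]
    have hPc' : Pc' n r c d (flipCD n r c d x) := (Pc'_flipCD x).2 hP
    by_cases hxy : x = y
    · subst hxy
      rw [if_pos ⟨hPc', rfl⟩, if_pos rfl, if_pos hP]
    · rw [if_neg (fun hc => hxy hc.2.symm), if_neg hxy]
  · rw [if_neg hP]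
    by_cases hxy : x = y
    · subst hxy
      rw [if_pos rfl, if_neg hP]
    · rw [if_neg hxy]

lemma qubitExcH_mul (hinj : Function.Injective (Sum.elim c d)) :
    (qubitExc n r c d)ᴴ * qubitExc n r c d
      = Matrix.diagonal (fun x => if Pc' n r c d x then 1 else 0) := by
  ext x y
  rw [Matrix.mul_apply]
  have hsum : ∀ u, (qubitExc n r c d)ᴴ x u * qubitExc n r c d u y
      = (if Pc' n r c d x ∧ u = flipCD n r c d x then (1:ℂ) else 0) *
          qubitExc n r c d u y := by
    intro u; rw [qubitExcH_apply hinj x u]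
  rw [Finset.sum_congr rfl fun u _ => hsum u, sum_collapse,
    Matrix.diagonal_apply]
  by_cases hP : Pc' n r c d x
  · rw [if_pos hP, qubitExc_apply hinj, flipCD_flipCD]
    have hPc : Pc n r c d (flipCD n r c d x) := (Pc_flipCD x).2 hP
    by_cases hxy : x = y
    · subst hxy
      rw [if_pos ⟨hPc, rfl⟩, if_pos rfl, if_pos hP]
    · rw [if_neg (fun hc => hxy hc.2.symm), if_neg hxy]
  · rw [if_neg hP]
    by_cases hxy : x = y
    · subst hxy
      rw [if_pos rfl, if_neg hP]
    · rw [if_neg hxy]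

lemma diag_mul_qubitExc (hinj : Function.Injective (Sum.elim c d)) :
    qubitExc n r c d * (qubitExc n r c d)ᴴ * qubitExc n r c d = qubitExc n r c d := by
  rw [qubitExc_mul_H hinj]
  ext x y
  rw [Matrix.diagonal_mul]
  by_cases hP : Pc n r c d x
  · rw [if_pos hP, one_mul]
  · rw [if_neg hP, zero_mul, qubitExc_apply hinj, if_neg (fun hc => hP hc.1)]

lemma diag_mul_qubitExcH (hinj : Function.Injective (Sum.elim c d)) :
    (qubitExc n r c d)ᴴ * qubitExc n r c d * (qubitExc n r c d)ᴴ = (qubitExc n r c d)ᴴ := by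
  rw [qubitExcH_mul hinj]
  ext x y
  rw [Matrix.diagonal_mul]
  by_cases hP : Pc' n r c d x
  · rw [if_pos hP, one_mul]
  · rw [if_neg hP, zero_mul, qubitExcH_apply hinj, if_neg (fun hc => hP hc.1)]

lemma A_cube (hinj : Function.Injective (Sum.elim c d)) (hr : 0 < r) :
    (qubitExc n r c d - (qubitExc n r c d)ᴴ) * (qubitExc n r c d - (qubitExc n r c d)ᴴ) *
        (qubitExc n r c d - (qubitExc n r c d)ᴴ)
      = -(qubitExc n r c d - (qubitExc n r c d)ᴴ) := by
  have h2 : qubitExc n r c d * (qubitExc n r c d)ᴴ * (qubitExc n r c d)ᴴ = 0 := by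
    rw [mul_assoc, qubitExcH_mul_self hinj hr, mul_zero]
  have h3 : (qubitExc n r c d)ᴴ * qubitExc n r c d * qubitExc n r c d = 0 := by
    rw [mul_assoc, qubitExc_mul_self hinj hr, mul_zero]
  have e1 : (qubitExc n r c d - (qubitExc n r c d)ᴴ) * (qubitExc n r c d - (qubitExc n r c d)ᴴ)
      = -(qubitExc n r c d * (qubitExc n r c d)ᴴ) - (qubitExc n r c d)ᴴ * qubitExc n r c d := by
    rw [sub_mul, mul_sub, mul_sub, qubitExc_mul_self hinj hr, qubitExcH_mul_self hinj hr]
    abel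
  rw [e1, sub_mul, neg_mul, mul_sub, mul_sub, diag_mul_qubitExc hinj, h2,
    diag_mul_qubitExcH hinj, h3]
  abel

end MoreEntry

section ZLemmas

variable {n r : ℕ} {c d : Fin r → Fin n} {V : Finset (Fin n)}

lemma zet_flipCD (hV : ∀ i ∈ V, ∀ s, i ≠ c s ∧ i ≠ d s) (x : Fin n → Fin 2) :
    zet n V (flipCD n r c d x) = zet n V x := by
  unfold zet
  refine Finset.prod_congr rfl fun a ha => ?_
  rw [flipCD_not x a (fun s => (hV a ha s).1) (fun s => (hV a ha s).2)]

lemma qubitExc_mul_Zstr_comm (hinj : Function.Injective (Sum.elim c d))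
    (hV : ∀ i ∈ V, ∀ s, i ≠ c s ∧ i ≠ d s) :
    qubitExc n r c d * Zstr n V = Zstr n V * qubitExc n r c d := by
  ext x y
  rw [Zstr_eq, Matrix.mul_diagonal, Matrix.diagonal_mul, qubitExc_apply hinj]
  by_cases h : Pc n r c d x ∧ y = flipCD n r c d x
  · rw [if_pos h, h.2, zet_flipCD hV, one_mul, mul_one]
  · rw [if_neg h, zero_mul, mul_zero]

lemma qubitExcH_mul_Zstr_comm (hinj : Function.Injective (Sum.elim c d))
    (hV : ∀ i ∈ V, ∀ s, i ≠ c s ∧ i ≠ d s) :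
    (qubitExc n r c d)ᴴ * Zstr n V = Zstr n V * (qubitExc n r c d)ᴴ := by
  ext x y
  rw [Zstr_eq, Matrix.mul_diagonal, Matrix.diagonal_mul, qubitExcH_apply hinj]
  by_cases h : Pc' n r c d x ∧ y = flipCD n r c d x
  · rw [if_pos h, h.2, zet_flipCD hV, one_mul, mul_one]
  · rw [if_neg h, zero_mul, mul_zero]

lemma Zstr_mul_self : Zstr n V * Zstr n V = 1 := by
  rw [Zstr_eq, Matrix.diagonal_mul_diagonal]
  have : (fun x => zet n V x * zet n V x) = fun _ => (1:ℂ) := by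
    funext x
    unfold zet
    rw [← Finset.prod_mul_distrib]
    rw [Finset.prod_congr rfl fun a _ => ?_, Finset.prod_const_one]
    by_cases h : x a = 1 <;> simp [h]
  rw [this, Matrix.diagonal_one]

lemma Zstr_herm : (Zstr n V)ᴴ = Zstr n V := by
  rw [Zstr_eq, Matrix.diagonal_conjTranspose]
  have hz : star (zet n V) = zet n V := by
    funext x
    show star (zet n V x) = zet n V x
    unfold zet
    rw [star_prod]
    refine Finset.prod_congr rfl fun a _ => ?_
    by_cases h : x a = 1 <;> simp [h]
  rw [hz]

lemma A_mul_Zstr_comm (hinj : Function.Injective (Sum.elim c d))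
    (hV : ∀ i ∈ V, ∀ s, i ≠ c s ∧ i ≠ d s) :
    (qubitExc n r c d - (qubitExc n r c d)ᴴ) * Zstr n V
      = Zstr n V * (qubitExc n r c d - (qubitExc n r c d)ᴴ) := by
  rw [sub_mul, mul_sub, qubitExc_mul_Zstr_comm hinj hV, qubitExcH_mul_Zstr_comm hinj hV]

lemma AZ_sq (hinj : Function.Injective (Sum.elim c d))
    (hV : ∀ i ∈ V, ∀ s, i ≠ c s ∧ i ≠ d s) :
    ((qubitExc n r c d - (qubitExc n r c d)ᴴ) * Zstr n V) *
        ((qubitExc n r c d - (qubitExc n r c d)ᴴ) * Zstr n V)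
      = (qubitExc n r c d - (qubitExc n r c d)ᴴ) * (qubitExc n r c d - (qubitExc n r c d)ᴴ) := by
  calc ((qubitExc n r c d - (qubitExc n r c d)ᴴ) * Zstr n V) *
        ((qubitExc n r c d - (qubitExc n r c d)ᴴ) * Zstr n V)
      = (qubitExc n r c d - (qubitExc n r c d)ᴴ) *
          ((Zstr n V * (qubitExc n r c d - (qubitExc n r c d)ᴴ)) * Zstr n V) := by
        rw [mul_assoc, mul_assoc]
    _ = (qubitExc n r c d - (qubitExc n r c d)ᴴ) *
          (((qubitExc n r c d - (qubitExc n r c d)ᴴ) * Zstr n V) * Zstr n V) := by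
        rw [A_mul_Zstr_comm hinj hV]
    _ = _ := by
        rw [mul_assoc ((qubitExc n r c d - (qubitExc n r c d)ᴴ)) (Zstr n V) (Zstr n V),
          Zstr_mul_self, mul_one]

lemma AZ_cube (hinj : Function.Injective (Sum.elim c d)) (hr : 0 < r)
    (hV : ∀ i ∈ V, ∀ s, i ≠ c s ∧ i ≠ d s) :
    ((qubitExc n r c d - (qubitExc n r c d)ᴴ) * Zstr n V) *
        ((qubitExc n r c d - (qubitExc n r c d)ᴴ) * Zstr n V) *
        ((qubitExc n r c d - (qubitExc n r c d)ᴴ) * Zstr n V)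
      = -((qubitExc n r c d - (qubitExc n r c d)ᴴ) * Zstr n V) := by
  rw [AZ_sq hinj hV, ← mul_assoc, A_cube hinj hr, neg_mul]

lemma flAll_flAll (x : Fin n → Fin 2) : flAll n (flAll n x) = x := by
  funext a
  exact fin2_succ_succ _

lemma Pc_flAll (x : Fin n → Fin 2) : Pc n r c d (flAll n x) ↔ Pc' n r c d x := by
  unfold Pc Pc' flAll
  constructor
  · rintro ⟨h1, h2⟩
    exact ⟨fun i => fin2_addone_eq_one.1 (h1 i), fun i => fin2_addone_eq_zero.1 (h2 i)⟩
  · rintro ⟨h1, h2⟩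
    refine ⟨fun i => ?_, fun i => ?_⟩
    · rw [h1 i]; exact fin2_add_zero_one
    · rw [h2 i]; exact fin2_add_one_one

lemma Pc'_flAll (x : Fin n → Fin 2) : Pc' n r c d (flAll n x) ↔ Pc n r c d x := by
  constructor
  · intro h
    have := (Pc_flAll (flAll n x)).2 h
    rwa [flAll_flAll] at this
  · intro h
    refine (Pc_flAll (flAll n x)).1 ?_
    rwa [flAll_flAll]

lemma flipCD_flAll (x : Fin n → Fin 2) :
    flipCD n r c d (flAll n x) = flAll n (flipCD n r c d x) := by
  funext a
  unfold flipCD flAll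
  by_cases h : (∃ i, a = c i) ∨ (∃ i, a = d i)
  · simp only [h, if_pos]
  · simp only [h, if_neg, if_false]

lemma flAll_inj {x y : Fin n → Fin 2} : flAll n x = flAll n y ↔ x = y := by
  constructor
  · intro h
    funext a
    exact fin2_addone_inj.1 (congrFun h a)
  · rintro rfl; rfl

lemma qubitExc_flAll (hinj : Function.Injective (Sum.elim c d)) (x y : Fin n → Fin 2) :
    qubitExc n r c d (flAll n x) (flAll n y) = (qubitExc n r c d)ᴴ x y := by
  rw [qubitExc_apply hinj, qubitExcH_apply hinj]
  have hiff : (Pc n r c d (flAll n x) ∧ flAll n y = flipCD n r c d (flAll n x))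
      ↔ (Pc' n r c d x ∧ y = flipCD n r c d x) := by
    rw [flipCD_flAll, flAll_inj, Pc_flAll]
  rw [if_congr hiff rfl rfl]

lemma qubitExcH_flAll (hinj : Function.Injective (Sum.elim c d)) (x y : Fin n → Fin 2) :
    (qubitExc n r c d)ᴴ (flAll n x) (flAll n y) = qubitExc n r c d x y := by
  rw [qubitExc_apply hinj, qubitExcH_apply hinj]
  have hiff : (Pc' n r c d (flAll n x) ∧ flAll n y = flipCD n r c d (flAll n x))
      ↔ (Pc n r c d x ∧ y = flipCD n r c d x) := by
    rw [flipCD_flAll, flAll_inj, Pc'_flAll]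
  rw [if_congr hiff rfl rfl]

lemma A_flAll (hinj : Function.Injective (Sum.elim c d)) (x y : Fin n → Fin 2) :
    (qubitExc n r c d - (qubitExc n r c d)ᴴ) (flAll n x) (flAll n y)
      = -((qubitExc n r c d - (qubitExc n r c d)ᴴ) x y) := by
  rw [Matrix.sub_apply, Matrix.sub_apply, qubitExc_flAll hinj, qubitExcH_flAll hinj, neg_sub]

lemma AA_flAll (hinj : Function.Injective (Sum.elim c d)) (x y : Fin n → Fin 2) :
    ((qubitExc n r c d - (qubitExc n r c d)ᴴ) * (qubitExc n r c d - (qubitExc n r c d)ᴴ))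
        (flAll n x) (flAll n y)
      = ((qubitExc n r c d - (qubitExc n r c d)ᴴ) * (qubitExc n r c d - (qubitExc n r c d)ᴴ)) x y := by
  rw [Matrix.mul_apply, Matrix.mul_apply]
  have hinv : Function.Involutive (flAll n : (Fin n → Fin 2) → (Fin n → Fin 2)) :=
    fun u => flAll_flAll u
  refine Fintype.sum_equiv hinv.toPerm _ _ fun u => ?_
  show (qubitExc n r c d - (qubitExc n r c d)ᴴ) (flAll n x) u *
      (qubitExc n r c d - (qubitExc n r c d)ᴴ) u (flAll n y)
    = (qubitExc n r c d - (qubitExc n r c d)ᴴ) x (flAll n u) *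
      (qubitExc n r c d - (qubitExc n r c d)ᴴ) (flAll n u) y
  have e1 : (qubitExc n r c d - (qubitExc n r c d)ᴴ) (flAll n x) u
      = -((qubitExc n r c d - (qubitExc n r c d)ᴴ) x (flAll n u)) := by
    conv_lhs => rw [← flAll_flAll u]
    rw [A_flAll hinj]
  have e2 : (qubitExc n r c d - (qubitExc n r c d)ᴴ) u (flAll n y)
      = -((qubitExc n r c d - (qubitExc n r c d)ᴴ) (flAll n u) y) := by
    conv_lhs => rw [← flAll_flAll u]
    rw [A_flAll hinj]
  rw [e1, e2, neg_mul_neg]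

lemma zet_parity (V : Finset (Fin n)) (v : Fin n → Fin 2) :
    zet n V v = if (∑ a ∈ V, v a) = (1 : Fin 2) then -1 else 1 := by
  induction V using Finset.induction_on with
  | empty => simp [zet]
  | @insert a S haS IH =>
    unfold zet at IH ⊢
    rw [Finset.prod_insert haS, Finset.sum_insert haS, IH]
    by_cases hva : v a = 1
    · rw [if_pos hva, hva]
      by_cases hs : (∑ b ∈ S, v b) = 1
      · rw [if_pos hs, hs, if_neg (by decide : ¬((1:Fin 2)+1 = 1))]
        norm_num
      · rw [if_neg hs, fin2_ne_one hs, if_pos (by decide : (1:Fin 2)+0 = 1)]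
        norm_num
    · rw [if_neg hva, fin2_ne_one hva]
      by_cases hs : (∑ b ∈ S, v b) = 1
      · rw [if_pos hs, hs, if_pos (by decide : (0:Fin 2)+1 = 1), one_mul]
      · rw [if_neg hs, fin2_ne_one hs, if_neg (by decide : ¬((0:Fin 2)+0 = 1)), one_mul]

end ZLemmas

section Closed

variable {n r : ℕ} {c d : Fin r → Fin n} {V : Finset (Fin n)}

lemma excRot_qubit_closed (hinj : Function.Injective (Sum.elim c d)) (hr : 0 < r) (ψ : ℝ) :
    excRot (qubitExc n r c d) ψ
      = 1 + ((Real.sin ψ : ℝ) : ℂ) • (qubitExc n r c d - (qubitExc n r c d)ᴴ)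
          + ((1:ℂ) - ((Real.cos ψ : ℝ) : ℂ)) •
            ((qubitExc n r c d - (qubitExc n r c d)ᴴ) *
              (qubitExc n r c d - (qubitExc n r c d)ᴴ)) := by
  rw [excRot, exp_three _ (A_cube hinj hr) (ψ : ℂ), ← Complex.ofReal_sin, ← Complex.ofReal_cos]

lemma ferm_sub (hinj : Function.Injective (Sum.elim c d))
    (hV : ∀ i ∈ V, ∀ s, i ≠ c s ∧ i ≠ d s) (ε : ℂ) (hε : ε = 1 ∨ ε = -1)
    (hJW : fermExc n r c d = ε • (qubitExc n r c d * Zstr n V)) :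
    fermExc n r c d - (fermExc n r c d)ᴴ
      = ε • ((qubitExc n r c d - (qubitExc n r c d)ᴴ) * Zstr n V) := by
  rw [hJW, Matrix.conjTranspose_smul, Matrix.conjTranspose_mul, Zstr_herm]
  have hsε : star ε = ε := by rcases hε with h | h <;> simp [h]
  rw [hsε, ← qubitExcH_mul_Zstr_comm hinj hV, ← smul_sub, ← sub_mul]

lemma excRot_ferm_closed (hinj : Function.Injective (Sum.elim c d)) (hr : 0 < r)
    (hV : ∀ i ∈ V, ∀ s, i ≠ c s ∧ i ≠ d s) (ε : ℂ) (hε : ε = 1 ∨ ε = -1)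
    (hJW : fermExc n r c d = ε • (qubitExc n r c d * Zstr n V))
    (e : ℝ) (hee : ε = (e : ℂ)) (θ : ℝ) :
    excRot (fermExc n r c d) θ
      = 1 + ((Real.sin (e*θ) : ℝ) : ℂ) •
            ((qubitExc n r c d - (qubitExc n r c d)ᴴ) * Zstr n V)
          + ((1:ℂ) - ((Real.cos (e*θ) : ℝ) : ℂ)) •
            ((qubitExc n r c d - (qubitExc n r c d)ᴴ) *
              (qubitExc n r c d - (qubitExc n r c d)ᴴ)) := by
  rw [excRot, ferm_sub hinj hV ε hε hJW, hee]
  have hsm : (θ:ℂ) • ((e:ℂ) • ((qubitExc n r c d - (qubitExc n r c d)ᴴ) * Zstr n V))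
      = ((e*θ : ℝ) : ℂ) • ((qubitExc n r c d - (qubitExc n r c d)ᴴ) * Zstr n V) := by
    rw [smul_smul]
    congr 1
    push_cast
    ring
  rw [hsm, exp_three _ (AZ_cube hinj hr hV) _, ← Complex.ofReal_sin, ← Complex.ofReal_cos,
    AZ_sq hinj hV]

lemma keyEntry (hinj : Function.Injective (Sum.elim c d)) (hr : 0 < r)
    (hV : ∀ i ∈ V, ∀ s, i ≠ c s ∧ i ≠ d s) (ε : ℂ) (hε : ε = 1 ∨ ε = -1)
    (hJW : fermExc n r c d = ε • (qubitExc n r c d * Zstr n V))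
    (e : ℝ) (hee : ε = (e : ℂ)) (θ : ℝ) (u v : Fin n → Fin 2) :
    excRot (fermExc n r c d) θ u v
      = excRot (qubitExc n r c d) (e*θ)
          (fun a => u a + (∑ b ∈ V, v b)) (fun a => v a + (∑ b ∈ V, v b)) := by
  rw [excRot_ferm_closed hinj hr hV ε hε hJW e hee θ, excRot_qubit_closed hinj hr (e*θ)]
  simp only [Matrix.add_apply, Matrix.smul_apply, Matrix.one_apply, smul_eq_mul]
  rw [Zstr_eq, Matrix.mul_diagonal]
  rcases fin2_one_or_zero (∑ b ∈ V, v b) with h0 | h1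
  · rw [h0]
    have hu : (fun a => u a + (0:Fin 2)) = u := funext fun a => add_zero _
    have hv : (fun a => v a + (0:Fin 2)) = v := funext fun a => add_zero _
    rw [hu, hv]
    have hz : zet n V v = 1 := by
      rw [zet_parity, h0, if_neg (by decide : ¬((0:Fin 2) = 1))]
    rw [hz]
    ring
  · rw [h1]
    have hu : (fun a => u a + (1:Fin 2)) = flAll n u := rfl
    have hv : (fun a => v a + (1:Fin 2)) = flAll n v := rfl
    rw [hu, hv]
    have hz : zet n V v = -1 := by
      rw [zet_parity, h1, if_pos rfl]
    rw [hz, A_flAll hinj, AA_flAll hinj]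
    have hδ : (if flAll n u = flAll n v then (1:ℂ) else 0) = (if u = v then (1:ℂ) else 0) :=
      if_congr flAll_inj rfl rfl
    rw [hδ]
    ring

end Closed

lemma fin2_eq_add_comm {a b cc : Fin 2} : a = b + cc ↔ b = a + cc := by
  revert a b cc; decide

lemma fin2_add_add (b cc : Fin 2) : b + cc + cc = b := by revert b cc; decide

/-- Add `z j` to every bit of replica `j`. -/
def addZ (n t : ℕ) (z : Fin (2*t) → Fin 2) (w : Fin (2*t) → Fin n → Fin 2) :
    Fin (2*t) → Fin n → Fin 2 := fun j i => w j i + z j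

section Assembly

variable {n t : ℕ}

lemma mulVec_basisVec (M : BigMat n t) (x : Fin (2*t) → Fin n → Fin 2) :
    M.mulVec (basisVec x) = fun x' => M x' x := by
  funext x'
  show ∑ y, M x' y * basisVec x y = M x' x
  have h : ∀ y, M x' y * basisVec x y = M x' y * (if y = x then (1:ℂ) else 0) := by
    intro y; rfl
  rw [Finset.sum_congr rfl fun y _ => h y]
  exact sum_delta' x (fun y => M x' y)

lemma flipOp_eq_delta (z : Fin (2*t) → Fin 2) (w u : Fin (2*t) → Fin n → Fin 2) :
    flipOp z w u = if u = addZ n t z w then 1 else 0 := by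
  unfold flipOp
  have hiff : (∀ j i, w j i = u j i + z j) ↔ u = addZ n t z w := by
    constructor
    · intro h
      funext j i
      exact fin2_eq_add_comm.1 (h j i)
    · rintro rfl
      intro j i
      exact (fin2_add_add (w j i) (z j)).symm
  rw [if_congr hiff rfl rfl]

lemma flipOp_eq_delta' (z : Fin (2*t) → Fin 2) (x w : Fin (2*t) → Fin n → Fin 2) :
    flipOp z w x = if w = addZ n t z x then 1 else 0 := by
  unfold flipOp
  have hiff : (∀ j i, w j i = x j i + z j) ↔ w = addZ n t z x := by
    constructor
    · intro h
      funext j i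
      exact h j i
    · rintro rfl
      intro j i
      rfl
  rw [if_congr hiff rfl rfl]

lemma conj_entry (z : Fin (2*t) → Fin 2) (M : BigMat n t)
    (x' x : Fin (2*t) → Fin n → Fin 2) :
    ((flipOp z : BigMat n t) * M * (flipOp z : BigMat n t)) x' x
      = M (addZ n t z x') (addZ n t z x) := by
  rw [Matrix.mul_apply]
  have h1 : ∀ w, ((flipOp z : BigMat n t) * M) x' w = M (addZ n t z x') w := by
    intro w
    rw [Matrix.mul_apply]
    have hs : ∀ u, flipOp z x' u * M u w
        = (if u = addZ n t z x' then (1:ℂ) else 0) * M u w := by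
      intro u; rw [flipOp_eq_delta]
    rw [Finset.sum_congr rfl fun u _ => hs u]
    exact sum_delta _ _
  have hs2 : ∀ w, ((flipOp z : BigMat n t) * M) x' w * flipOp z w x
      = M (addZ n t z x') w * (if w = addZ n t z x then (1:ℂ) else 0) := by
    intro w; rw [h1 w, flipOp_eq_delta']
  rw [Finset.sum_congr rfl fun w _ => hs2 w]
  exact sum_delta' _ _

lemma integral_neg_periodic (K : ℝ → ℂ) (hper : ∀ ψ, K (ψ + 2*Real.pi) = K ψ) :
    (∫ θ in Set.Ico (0:ℝ) (2*Real.pi), K (-θ)) = ∫ θ in Set.Ico (0:ℝ) (2*Real.pi), K θ := by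
  have hT : (0:ℝ) ≤ 2*Real.pi := by positivity
  calc (∫ θ in Set.Ico (0:ℝ) (2*Real.pi), K (-θ))
      = ∫ θ in Set.Ioc (0:ℝ) (2*Real.pi), K (-θ) := by
        rw [MeasureTheory.integral_Ico_eq_integral_Ioo,
          ← MeasureTheory.integral_Ioc_eq_integral_Ioo]
    _ = ∫ θ in (0:ℝ)..(2*Real.pi), K (-θ) := (intervalIntegral.integral_of_le hT).symm
    _ = ∫ θ in (-(2*Real.pi))..(-(0:ℝ)), K θ := intervalIntegral.integral_comp_neg K
    _ = ∫ θ in (-(2*Real.pi))..(0:ℝ), K θ := by rw [neg_zero]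
    _ = ∫ θ in (-(2*Real.pi))..(0:ℝ), K (θ + 2*Real.pi) :=
        intervalIntegral.integral_congr (fun θ _ => (hper θ).symm)
    _ = ∫ θ in (-(2*Real.pi) + 2*Real.pi)..((0:ℝ) + 2*Real.pi), K θ :=
        intervalIntegral.integral_comp_add_right K (2*Real.pi)
    _ = ∫ θ in (0:ℝ)..(2*Real.pi), K θ := by rw [neg_add_cancel, zero_add]
    _ = ∫ θ in Set.Ioc (0:ℝ) (2*Real.pi), K θ := intervalIntegral.integral_of_le hT
    _ = ∫ θ in Set.Ico (0:ℝ) (2*Real.pi), K θ := by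
        rw [MeasureTheory.integral_Ioc_eq_integral_Ioo,
          ← MeasureTheory.integral_Ico_eq_integral_Ioo]

end Assembly

section KronKey

variable {n r : ℕ} {c d : Fin r → Fin n} {V : Finset (Fin n)}

lemma kron_key {t : ℕ} (hinj : Function.Injective (Sum.elim c d)) (hr : 0 < r)
    (hV : ∀ i ∈ V, ∀ s, i ≠ c s ∧ i ≠ d s) (ε : ℂ) (hε : ε = 1 ∨ ε = -1)
    (hJW : fermExc n r c d = ε • (qubitExc n r c d * Zstr n V))
    (e : ℝ) (hee : ε = (e : ℂ)) (θ : ℝ) (x x' : Fin (2*t) → Fin n → Fin 2) :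
    momentKron t (excRot (fermExc n r c d) θ) x' x
      = momentKron t (excRot (qubitExc n r c d) (e*θ))
          (addZ n t (zV V x) x') (addZ n t (zV V x) x) := by
  unfold momentKron
  refine Finset.prod_congr rfl fun j _ => ?_
  have hkey := keyEntry hinj hr hV ε hε hJW e hee θ (x' j) (x j)
  have harg : excRot (qubitExc n r c d) (e*θ)
      (fun a => x' j a + (∑ b ∈ V, x j b)) (fun a => x j a + (∑ b ∈ V, x j b))
      = excRot (qubitExc n r c d) (e*θ) (addZ n t (zV V x) x' j) (addZ n t (zV V x) x j) := rfl
  rw [harg] at hkey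
  by_cases hj : (j:ℕ) < t
  · rw [if_pos hj, if_pos hj, hkey]
  · rw [if_neg hj, if_neg hj, hkey]

end KronKey


/-- The conversion rule between fermionic and qubit excitation
rotations: `⟨R⟩_t |Φ⟩ = (∏ X_i^{z⃗}) ⟨R'⟩_t (∏ X_i^{z⃗}) |Φ⟩`. -/
theorem momentSOp_conversion_rule
    (n t r : ℕ) (ht : 0 < t) (hr : 0 < r) (c d : Fin r → Fin n)
    (hinj : Function.Injective (Sum.elim c d))
    (V : Finset (Fin n)) (hV : ∀ i ∈ V, ∀ s, i ≠ c s ∧ i ≠ d s)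
    (ε : ℂ) (hε : ε = 1 ∨ ε = -1)
    (hJW : fermExc n r c d = ε • (qubitExc n r c d * Zstr n V))
    (x : Fin (2*t) → Fin n → Fin 2) :
    (momentSOp t (excRot (fermExc n r c d))).mulVec (basisVec x) =
      (flipOp (zV V x) * momentSOp t (excRot (qubitExc n r c d)) *
        flipOp (zV V x)).mulVec (basisVec x) := by
  obtain ⟨e, hee, he⟩ : ∃ e : ℝ, ε = (e:ℂ) ∧ (e = 1 ∨ e = -1) := by
    rcases hε with h | h
    · exact ⟨1, by simp [h], Or.inl rfl⟩
    · exact ⟨-1, by simp [h], Or.inr rfl⟩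
  rw [mulVec_basisVec, mulVec_basisVec]
  funext x'
  rw [conj_entry]
  simp only [momentSOp]
  congr 1
  have hker : ∀ θ : ℝ, momentKron t (excRot (fermExc n r c d) θ) x' x
      = momentKron t (excRot (qubitExc n r c d) (e*θ))
          (addZ n t (zV V x) x') (addZ n t (zV V x) x) :=
    fun θ => kron_key hinj hr hV ε hε hJW e hee θ x x'
  rcases he with he1 | he2
  · subst he1
    simp only [hker, one_mul]
  · subst he2
    simp only [hker, neg_one_mul]
    exact integral_neg_periodic
      (fun ψ => momentKron t (excRot (qubitExc n r c d) ψ)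
        (addZ n t (zV V x) x') (addZ n t (zV V x) x))
      (fun ψ => by
        have hq : excRot (qubitExc n r c d) (ψ + 2*Real.pi)
            = excRot (qubitExc n r c d) ψ := by
          rw [excRot_qubit_closed hinj hr, excRot_qubit_closed hinj hr,
            Real.sin_add_two_pi, Real.cos_add_two_pi]
        simp only [hq])

end DUCC
end
end

section
/- Let R be a (qubit) excitation rotation, t ∈ ℕ₊, and p ∈ {1,…,n}. Then the t-th moment superoperator ⟨R⟩_t commutes with Z_p^{⊗2t}, the operator that applies Pauli-Z to qubit p in each of the 2t tensor factors of (ℂ^{2^n})^{⊗2t}: [⟨R⟩_t, Z_p^{⊗2t}] = 0. -/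
open MeasureTheory Matrix Finset Filter

noncomputable section

namespace DUCC

attribute [local instance] Classical.propDecidable

/-! ### Auxiliary entrywise properties -/

section EntryProps
variable {n : ℕ}

/-- Nonzero entries preserve coordinate `q`. -/
def FixAt (M : QMat n) (q : Fin n) : Prop := ∀ x y, M x y ≠ 0 → x q = y q

/-- Nonzero entries flip coordinate `q`. -/
def FlipAt (M : QMat n) (q : Fin n) : Prop := ∀ x y, M x y ≠ 0 → x q ≠ y q

/-- Nonzero entries raise coordinate `q` from 0 to 1. -/
def LowAt (M : QMat n) (q : Fin n) : Prop := ∀ x y, M x y ≠ 0 → x q = 0 ∧ y q = 1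

lemma fin2_trans {a b c : Fin 2} (h1 : a ≠ b) (h2 : b ≠ c) : a = c := by
  fin_cases a <;> fin_cases b <;> fin_cases c <;> simp_all

lemma entry_ne_zero_of_mul {M N : QMat n} {x y} (h : (M * N) x y ≠ 0) :
    ∃ u, M x u ≠ 0 ∧ N u y ≠ 0 := by
  by_contra hc
  push_neg at hc
  apply h
  rw [Matrix.mul_apply]
  refine Finset.sum_eq_zero fun u _ => ?_
  by_cases h1 : M x u = 0
  · rw [h1, zero_mul]
  · rw [hc u h1, mul_zero]

lemma FixAt.mul {M N : QMat n} {q} (hM : FixAt M q) (hN : FixAt N q) : FixAt (M * N) q := by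
  intro x y h
  obtain ⟨u, h1, h2⟩ := entry_ne_zero_of_mul h
  exact (hM x u h1).trans (hN u y h2)

lemma FixAt.mul_flip {M N : QMat n} {q} (hM : FixAt M q) (hN : FlipAt N q) :
    FlipAt (M * N) q := by
  intro x y h
  obtain ⟨u, h1, h2⟩ := entry_ne_zero_of_mul h
  rw [hM x u h1]; exact hN u y h2

lemma FlipAt.mul_fix {M N : QMat n} {q} (hM : FlipAt M q) (hN : FixAt N q) :
    FlipAt (M * N) q := by
  intro x y h
  obtain ⟨u, h1, h2⟩ := entry_ne_zero_of_mul h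
  rw [← hN u y h2]; exact hM x u h1

lemma FixAt.mul_low {M N : QMat n} {q} (hM : FixAt M q) (hN : LowAt N q) :
    LowAt (M * N) q := by
  intro x y h
  obtain ⟨u, h1, h2⟩ := entry_ne_zero_of_mul h
  exact ⟨(hM x u h1).trans (hN u y h2).1, (hN u y h2).2⟩

lemma LowAt.mul_fix {M N : QMat n} {q} (hM : LowAt M q) (hN : FixAt N q) :
    LowAt (M * N) q := by
  intro x y h
  obtain ⟨u, h1, h2⟩ := entry_ne_zero_of_mul h
  exact ⟨(hM x u h1).1, (hN u y h2) ▸ (hM x u h1).2⟩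

lemma LowAt.flip {M : QMat n} {q} (hM : LowAt M q) : FlipAt M q := by
  intro x y h
  obtain ⟨h0, h1⟩ := hM x y h
  rw [h0, h1]; decide

lemma FixAt.conjTranspose {M : QMat n} {q} (hM : FixAt M q) : FixAt Mᴴ q := by
  intro x y h
  have : M y x ≠ 0 := by
    simpa [Matrix.conjTranspose_apply, star_eq_zero] using h
  exact (hM y x this).symm

lemma FlipAt.conjTranspose {M : QMat n} {q} (hM : FlipAt M q) : FlipAt Mᴴ q := by
  intro x y h
  have : M y x ≠ 0 := by
    simpa [Matrix.conjTranspose_apply, star_eq_zero] using h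
  exact (hM y x this).symm

lemma FixAt.one {q : Fin n} : FixAt (1 : QMat n) q := by
  intro x y h
  by_contra hne
  exact h (Matrix.one_apply_ne (fun he => hne (by rw [he])))

lemma finProd_fix {r : ℕ} {f : Fin r → QMat n} {q : Fin n}
    (h : ∀ i, FixAt (f i) q) : FixAt (finProd r f) q := by
  induction r with
  | zero => exact FixAt.one
  | succ r ih =>
    rw [finProd, List.finRange_succ, List.map_cons, List.prod_cons, List.map_map]
    exact (h 0).mul (ih (f := fun i => f i.succ) (fun i => h i.succ))

lemma finProd_flip {r : ℕ} {f : Fin r → QMat n} {q : Fin n} (i0 : Fin r)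
    (h0 : FlipAt (f i0) q) (h : ∀ i, i ≠ i0 → FixAt (f i) q) : FlipAt (finProd r f) q := by
  induction r with
  | zero => exact absurd i0.2 (by omega)
  | succ r ih =>
    rw [finProd, List.finRange_succ, List.map_cons, List.prod_cons, List.map_map]
    rcases Fin.eq_zero_or_eq_succ i0 with h1 | ⟨j, rfl⟩
    · subst h1
      exact h0.mul_fix (finProd_fix (fun i => h i.succ (Fin.succ_ne_zero i)))
    · refine (h 0 (Fin.succ_ne_zero j).symm).mul_flip
        (ih (f := fun i => f i.succ) j h0 (fun i hij => h i.succ ?_))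
      simpa using hij

lemma finProd_low {r : ℕ} {f : Fin r → QMat n} {q : Fin n} (i0 : Fin r)
    (h0 : LowAt (f i0) q) (h : ∀ i, i ≠ i0 → FixAt (f i) q) : LowAt (finProd r f) q := by
  induction r with
  | zero => exact absurd i0.2 (by omega)
  | succ r ih =>
    rw [finProd, List.finRange_succ, List.map_cons, List.prod_cons, List.map_map]
    rcases Fin.eq_zero_or_eq_succ i0 with h1 | ⟨j, rfl⟩
    · subst h1
      exact h0.mul_fix (finProd_fix (fun i => h i.succ (Fin.succ_ne_zero i)))
    · refine (h 0 (Fin.succ_ne_zero j).symm).mul_low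
        (ih (f := fun i => f i.succ) j h0 (fun i hij => h i.succ ?_))
      simpa using hij

lemma embed_fix {M : Matrix (Fin 2) (Fin 2) ℂ} {p q : Fin n} (hpq : q ≠ p) :
    FixAt (embed n M p) q := by
  intro x y h
  rw [embed] at h
  by_cases hc : ∀ a, a ≠ p → x a = y a
  · exact hc q hpq
  · simp [hc] at h

lemma embed_Qmat_low (p : Fin n) : LowAt (embed n Qmat p) p := by
  intro x y h
  rw [embed] at h
  have : Qmat (x p) (y p) ≠ 0 := fun hq => h (by rw [hq, mul_zero])
  rw [Qmat] at this
  by_cases hc : x p = 0 ∧ y p = 1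
  · exact hc
  · simp [hc] at this

lemma embed_Qd_flip (p : Fin n) : FlipAt (embed n Qd p) p := by
  intro x y h
  rw [embed] at h
  have : Qd (x p) (y p) ≠ 0 := fun hq => h (by rw [hq, mul_zero])
  rw [Qd, Matrix.conjTranspose_apply, Qmat] at this
  by_cases hc : y p = 0 ∧ x p = 1
  · rw [hc.1, hc.2]; decide
  · simp [hc] at this

lemma Zstr_fix {S : Finset (Fin n)} {q : Fin n} : FixAt (Zstr n S) q := by
  intro x y h
  by_contra hne
  refine h (Matrix.diagonal_apply_ne _ (fun he => hne ?_))
  rw [he]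

lemma aop_fix {p q : Fin n} (hpq : q ≠ p) : FixAt (aop n p) q :=
  Zstr_fix.mul (embed_fix hpq)

lemma aop_low (p : Fin n) : LowAt (aop n p) p :=
  Zstr_fix.mul_low (embed_Qmat_low p)

end EntryProps


/-! ### Signed partial permutation property -/

section SPPProps
variable {n : ℕ}

/-- `M` is a signed partial permutation matrix. -/
def SPP (M : QMat n) : Prop :=
  (∀ x y y', M x y ≠ 0 → M x y' ≠ 0 → y = y') ∧
  (∀ x x' y, M x y ≠ 0 → M x' y ≠ 0 → x = x') ∧
  (∀ x y, M x y = 0 ∨ M x y = 1 ∨ M x y = -1)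

lemma SPP.one : SPP (1 : QMat n) := by
  refine ⟨fun x y y' h h' => ?_, fun x x' y h h' => ?_, fun x y => ?_⟩
  · have h1 : x = y := by_contra fun hc => h (Matrix.one_apply_ne hc)
    have h2 : x = y' := by_contra fun hc => h' (Matrix.one_apply_ne hc)
    rw [← h1, h2]
  · have h1 : x = y := by_contra fun hc => h (Matrix.one_apply_ne hc)
    have h2 : x' = y := by_contra fun hc => h' (Matrix.one_apply_ne hc)
    rw [h1, h2]
  · by_cases hxy : x = y
    · subst hxy; right; left; exact Matrix.one_apply_eq x
    · left; exact Matrix.one_apply_ne hxy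

lemma SPP.mul {M N : QMat n} (hM : SPP M) (hN : SPP N) : SPP (M * N) := by
  obtain ⟨hMr, hMc, hMv⟩ := hM
  obtain ⟨hNr, hNc, hNv⟩ := hN
  refine ⟨fun x y y' h h' => ?_, fun x x' y h h' => ?_, fun x y => ?_⟩
  · obtain ⟨u, h1, h2⟩ := entry_ne_zero_of_mul h
    obtain ⟨u', h1', h2'⟩ := entry_ne_zero_of_mul h'
    exact hNr u y y' h2 ((hMr x u u' h1 h1') ▸ h2')
  · obtain ⟨u, h1, h2⟩ := entry_ne_zero_of_mul h
    obtain ⟨u', h1', h2'⟩ := entry_ne_zero_of_mul h'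
    exact hMc x x' u h1 ((hNc u u' y h2 h2') ▸ h1')
  · by_cases hz : ∀ u, M x u * N u y = 0
    · left
      rw [Matrix.mul_apply]
      exact Finset.sum_eq_zero fun u _ => hz u
    · push_neg at hz
      obtain ⟨u0, hu0⟩ := hz
      have hM0 : M x u0 ≠ 0 := fun h => hu0 (by rw [h, zero_mul])
      have hN0 : N u0 y ≠ 0 := fun h => hu0 (by rw [h, mul_zero])
      have hsum : (M * N) x y = M x u0 * N u0 y := by
        rw [Matrix.mul_apply]
        refine Finset.sum_eq_single u0 (fun u _ hu => ?_) (fun h => absurd (Finset.mem_univ u0) h)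
        by_cases h1 : M x u = 0
        · rw [h1, zero_mul]
        · by_cases h2 : N u y = 0
          · rw [h2, mul_zero]
          · exact absurd (hMr x u u0 h1 hM0) hu
      rw [hsum]
      rcases hMv x u0 with h | h | h <;> rcases hNv u0 y with h' | h' | h' <;>
        simp [h, h']

lemma SPP.conjTranspose {M : QMat n} (hM : SPP M) : SPP Mᴴ := by
  obtain ⟨hMr, hMc, hMv⟩ := hM
  have hst : ∀ x y, Mᴴ x y ≠ 0 → M y x ≠ 0 := fun x y h => by
    simpa [Matrix.conjTranspose_apply, star_eq_zero] using h
  refine ⟨fun x y y' h h' => hMc y y' x (hst _ _ h) (hst _ _ h'),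
    fun x x' y h h' => hMr y x x' (hst _ _ h) (hst _ _ h'), fun x y => ?_⟩
  rw [Matrix.conjTranspose_apply]
  rcases hMv y x with h | h | h <;> rw [h] <;> simp

lemma SPP.finProd {r : ℕ} {f : Fin r → QMat n} (h : ∀ i, SPP (f i)) :
    SPP (DUCC.finProd r f) := by
  induction r with
  | zero => exact SPP.one
  | succ r ih =>
    rw [DUCC.finProd, List.finRange_succ, List.map_cons, List.prod_cons, List.map_map]
    exact (h 0).mul (ih (f := fun i => f i.succ) (fun i => h i.succ))

lemma SPP.embed_Qmat (p : Fin n) : SPP (embed n Qmat p) := by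
  have key : ∀ x y, embed n Qmat p x y ≠ 0 →
      (x p = 0 ∧ y p = 1 ∧ ∀ a, a ≠ p → x a = y a) := by
    intro x y h
    rw [embed] at h
    by_cases hc : ∀ a, a ≠ p → x a = y a
    · have : Qmat (x p) (y p) ≠ 0 := fun hq => h (by rw [hq, mul_zero])
      rw [Qmat] at this
      by_cases hc2 : x p = 0 ∧ y p = 1
      · exact ⟨hc2.1, hc2.2, hc⟩
      · simp [hc2] at this
    · simp [hc] at h
  refine ⟨fun x y y' h h' => ?_, fun x x' y h h' => ?_, fun x y => ?_⟩
  · obtain ⟨_, h2, h3⟩ := key x y h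
    obtain ⟨_, h2', h3'⟩ := key x y' h'
    funext a
    by_cases ha : a = p
    · rw [ha, h2, h2']
    · rw [← h3 a ha, ← h3' a ha]
  · obtain ⟨h1, _, h3⟩ := key x y h
    obtain ⟨h1', _, h3'⟩ := key x' y h'
    funext a
    by_cases ha : a = p
    · rw [ha, h1, h1']
    · rw [h3 a ha, h3' a ha]
  · by_cases h1 : ∀ a, a ≠ p → x a = y a
    · by_cases h2 : x p = 0 ∧ y p = 1
      · right; left
        rw [embed]
        rw [if_pos (fun a ha => h1 a ha), one_mul, Qmat, if_pos h2]
      · left; simp [embed, Qmat, h2]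
    · left; simp [embed, h1]

lemma SPP.zstr (S : Finset (Fin n)) : SPP (Zstr n S) := by
  have hd : ∀ x : Fin n → Fin 2, (∏ a ∈ S, (if x a = 1 then (-1 : ℂ) else 1)) = 1 ∨
      (∏ a ∈ S, (if x a = 1 then (-1 : ℂ) else 1)) = -1 := by
    intro x
    refine Finset.prod_induction _ (fun z => z = 1 ∨ z = -1) ?_ (Or.inl rfl) (fun a _ => ?_)
    · rintro a b (rfl | rfl) (rfl | rfl) <;> simp
    · by_cases h : x a = 1 <;> simp [h]
  have key : ∀ x y, DUCC.Zstr n S x y ≠ 0 → x = y := by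
    intro x y h
    by_contra hne
    exact h (Matrix.diagonal_apply_ne _ hne)
  refine ⟨fun x y y' h h' => (key x y h).symm.trans (key x y' h'),
    fun x x' y h h' => (key x y h).trans (key x' y h').symm, fun x y => ?_⟩
  by_cases hxy : x = y
  · subst hxy
    rw [DUCC.Zstr, Matrix.diagonal_apply_eq]
    right; exact hd x
  · left; exact Matrix.diagonal_apply_ne _ hxy

lemma SPP.aop_spp (p : Fin n) : SPP (DUCC.aop n p) := (SPP.zstr _).mul (SPP.embed_Qmat p)

/-- Partial isometry property from `SPP`. -/
lemma SPP.partial_isometry {M : QMat n} (hM : SPP M) : M * Mᴴ * M = M := by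
  obtain ⟨hMr, hMc, hMv⟩ := hM
  have hval : ∀ x y, M x y ≠ 0 → M x y * star (M x y) = 1 := by
    intro x y h
    rcases hMv x y with h' | h' | h' <;> simp [h'] at h ⊢
  ext x y
  rw [Matrix.mul_apply]
  by_cases hxy : M x y = 0
  · rw [hxy]
    refine Finset.sum_eq_zero fun v _ => ?_
    by_cases hvy : M v y = 0
    · rw [hvy, mul_zero]
    · have : (M * Mᴴ) x v = 0 := by
        rw [Matrix.mul_apply]
        refine Finset.sum_eq_zero fun u _ => ?_
        by_cases h1 : M x u = 0
        · rw [h1, zero_mul]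
        · by_cases h2 : Mᴴ u v = 0
          · rw [h2, mul_zero]
          · have h2' : M v u ≠ 0 := by
              simpa [Matrix.conjTranspose_apply, star_eq_zero] using h2
            exact absurd ((hMc x v u h1 h2') ▸ hxy) hvy
      rw [this, zero_mul]
  · refine (Finset.sum_eq_single x (fun v _ hv => ?_) (fun h => absurd (Finset.mem_univ x) h)).trans ?_
    · by_cases hvy : M v y = 0
      · rw [hvy, mul_zero]
      · exact absurd (hMc v x y hvy hxy) hv
    · have : (M * Mᴴ) x x = 1 := by
        rw [Matrix.mul_apply]
        refine (Finset.sum_eq_single y (fun u _ hu => ?_) (fun h => absurd (Finset.mem_univ y) h)).trans ?_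
        · by_cases h1 : M x u = 0
          · rw [h1, zero_mul]
          · exact absurd (hMr x u y h1 hxy) hu
        · rw [Matrix.conjTranspose_apply]
          exact hval x y hxy
      rw [this, one_mul]
  

end SPPProps


/-! ### Properties of excitation operators -/

section ExcProps
variable {n : ℕ}

lemma embed_conjT (M : Matrix (Fin 2) (Fin 2) ℂ) (p : Fin n) :
    (embed n M p)ᴴ = embed n Mᴴ p := by
  ext x y
  show star (embed n M p y x) = embed n Mᴴ p x y
  rw [embed, embed, star_mul']
  congr 1
  · by_cases hc : ∀ a, a ≠ p → x a = y a
    · rw [if_pos hc, if_pos (fun a ha => (hc a ha).symm), star_one]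
    · rw [if_neg hc, if_neg (fun h => hc fun a ha => (h a ha).symm), star_zero]

lemma SPP.embed_Qd (p : Fin n) : SPP (embed n Qd p) := by
  rw [Qd, ← embed_conjT]
  exact (SPP.embed_Qmat p).conjTranspose

lemma LowAt.mul_self_eq_zero {M : QMat n} {q : Fin n} (h : LowAt M q) : M * M = 0 := by
  ext x y
  rw [Matrix.mul_apply, Matrix.zero_apply]
  refine Finset.sum_eq_zero fun u _ => ?_
  by_cases h1 : M x u = 0
  · rw [h1, zero_mul]
  by_cases h2 : M u y = 0
  · rw [h2, mul_zero]
  have hu1 := (h x u h1).2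
  rw [(h u y h2).1] at hu1
  exact absurd hu1 (by decide)

section TauProps

variable {r : ℕ} {c d : Fin r → Fin n} (hr : 0 < r)
  (hinj : Function.Injective (Sum.elim c d))
  {A B : Fin r → QMat n}
  (hAfix : ∀ i q, q ≠ c i → FixAt (A i) q) (hAflip : ∀ i, FlipAt (A i) (c i))
  (hAspp : ∀ i, SPP (A i))
  (hBfix : ∀ i q, q ≠ d i → FixAt (B i) q) (hBlow : ∀ i, LowAt (B i) (d i))
  (hBspp : ∀ i, SPP (B i))

include hinj

lemma hinj_cd : ∀ i j, c i ≠ d j := fun i j h => by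
  have := hinj (a₁ := Sum.inl i) (a₂ := Sum.inr j) (by simpa using h)
  simp at this

lemma hinj_cc : ∀ i j, i ≠ j → c i ≠ c j := fun i j hij h => by
  have := hinj (a₁ := Sum.inl i) (a₂ := Sum.inl j) (by simpa using h)
  simp at this
  exact hij this

lemma hinj_dd : ∀ i j, i ≠ j → d i ≠ d j := fun i j hij h => by
  have := hinj (a₁ := Sum.inr i) (a₂ := Sum.inr j) (by simpa using h)
  simp at this
  exact hij this

include hAspp hBspp in
lemma tau_spp : SPP (finProd r A * finProd r B) :=
  (SPP.finProd hAspp).mul (SPP.finProd hBspp)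

include hr hAfix hBfix hBlow in
lemma tau_low : LowAt (finProd r A * finProd r B) (d ⟨0, hr⟩) := by
  refine (finProd_fix fun i => hAfix i _ (Ne.symm (hinj_cd hinj i ⟨0, hr⟩))).mul_low ?_
  exact finProd_low ⟨0, hr⟩ (hBlow ⟨0, hr⟩)
    (fun i hi => hBfix i _ (Ne.symm (hinj_dd hinj i ⟨0, hr⟩ hi)))

include hAfix hAflip hBfix hBlow in
lemma tau_fix_or_flip (p : Fin n) :
    FixAt (finProd r A * finProd r B) p ∨ FlipAt (finProd r A * finProd r B) p := by
  by_cases hc : ∃ i, p = c i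
  · obtain ⟨i, rfl⟩ := hc
    right
    refine (finProd_flip i (hAflip i) (fun j hj => hAfix j _ ?_)).mul_fix
      (finProd_fix fun j => hBfix j _ (hinj_cd hinj i j))
    exact hinj_cc hinj i j (Ne.symm hj)
  by_cases hd : ∃ i, p = d i
  · obtain ⟨i, rfl⟩ := hd
    right
    refine (finProd_fix fun j => hAfix j _ (Ne.symm (hinj_cd hinj j i))).mul_flip
      (finProd_flip i (hBlow i).flip (fun j hj => hBfix j _ ?_))
    exact hinj_dd hinj i j (Ne.symm hj)
  push_neg at hc hd
  left
  exact (finProd_fix fun j => hAfix j _ (hc j)).mul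
    (finProd_fix fun j => hBfix j _ (hd j))

end TauProps

/-- The concrete facts for a qubit or fermionic excitation operator. -/
lemma exc_facts {r : ℕ} {c d : Fin r → Fin n} (hr : 0 < r)
    (hinj : Function.Injective (Sum.elim c d)) {τ : QMat n}
    (hτ : τ = qubitExc n r c d ∨ τ = fermExc n r c d) :
    SPP τ ∧ (τ * τ = 0) ∧ ∀ p, FixAt τ p ∨ FlipAt τ p := by
  rcases hτ with rfl | rfl
  · rw [qubitExc]
    refine ⟨tau_spp hinj (fun i => SPP.embed_Qd (c i)) (fun i => SPP.embed_Qmat (d i)),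
      (tau_low hr hinj (fun i q h => embed_fix h) (fun i q h => embed_fix h)
        (fun i => embed_Qmat_low (d i))).mul_self_eq_zero,
      tau_fix_or_flip hinj (fun i q h => embed_fix h) (fun i => embed_Qd_flip (c i))
        (fun i q h => embed_fix h) (fun i => embed_Qmat_low (d i))⟩
  · rw [fermExc]
    refine ⟨tau_spp hinj (fun i => (SPP.aop_spp (c i)).conjTranspose)
        (fun i => SPP.aop_spp (d i)),
      (tau_low hr hinj (fun i q h => (aop_fix h).conjTranspose) (fun i q h => aop_fix h)
        (fun i => aop_low (d i))).mul_self_eq_zero,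
      tau_fix_or_flip hinj (fun i q h => (aop_fix h).conjTranspose)
        (fun i => (aop_low (c i)).flip.conjTranspose)
        (fun i q h => aop_fix h) (fun i => aop_low (d i))⟩

/-- `G³ = -G` for `G = τ - τᴴ`. -/
lemma G_cube {τ : QMat n} (hspp : SPP τ) (hsq : τ * τ = 0) :
    (τ - τᴴ) * (τ - τᴴ) * ((τ - τᴴ)) = -(τ - τᴴ) := by
  have hb : τᴴ * τᴴ = 0 := by
    rw [← Matrix.conjTranspose_mul, hsq, Matrix.conjTranspose_zero]
  have hab : τ * τᴴ * τ = τ := hspp.partial_isometry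
  have hba : τᴴ * τ * τᴴ = τᴴ := by
    have := congrArg Matrix.conjTranspose hab
    rwa [Matrix.conjTranspose_mul, Matrix.conjTranspose_mul,
      Matrix.conjTranspose_conjTranspose, ← Matrix.mul_assoc] at this
  have hab' : τ * (τᴴ * τ) = τ := by rw [← Matrix.mul_assoc]; exact hab
  have hba' : τᴴ * (τ * τᴴ) = τᴴ := by rw [← Matrix.mul_assoc]; exact hba
  have e : (τ - τᴴ) * (τ - τᴴ) = -(τ * τᴴ) - τᴴ * τ := by
    rw [sub_mul, mul_sub, mul_sub, hsq, hb]
    abel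
  rw [e, sub_mul, neg_mul, mul_sub, mul_sub]
  rw [Matrix.mul_assoc τ τᴴ τᴴ, hb, Matrix.mul_assoc τᴴ τ τ, hsq, hab, hba]
  simp only [Matrix.mul_zero, mul_zero]
  abel

end ExcProps


/-! ### Closed form for the exponential of `G` with `G³ = -G` -/

section ClosedForm
variable {n : ℕ}

lemma exp_closed_form (G : QMat n) (hG3 : G * G * G = -G) (θ : ℝ) :
    NormedSpace.exp ((θ : ℂ) • G) =
      1 + Real.sin θ • G + (1 - Real.cos θ) • (G * G) := by
  letI : SeminormedRing (QMat n) := Matrix.linftyOpSemiNormedRing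
  letI : NormedRing (QMat n) := Matrix.linftyOpNormedRing
  letI : NormedAlgebra ℝ (QMat n) := Matrix.linftyOpNormedAlgebra
  have hsmul : ∀ s : ℝ, (s : ℂ) • G = s • G := fun s => by
    rw [show ((s : ℝ) : ℂ) = algebraMap ℝ ℂ s from rfl, algebraMap_smul]
  rw [hsmul]
  have h3 : ∀ s : ℝ, HasDerivAt (fun u : ℝ => NormedSpace.exp (u • (-G)))
      (NormedSpace.exp (s • (-G)) * (-G)) s := fun s => hasDerivAt_exp_smul_const (-G) s
  set c : ℝ → QMat n := fun s => 1 + Real.sin s • G + (1 - Real.cos s) • (G * G) with hcdef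
  have hG3' : G * (G * G) = -G := by rw [← mul_assoc]; exact hG3
  have hc' : ∀ s : ℝ, HasDerivAt c (Real.cos s • G + Real.sin s • (G * G)) s := by
    intro s
    have hs : HasDerivAt (fun u : ℝ => Real.sin u • G) (Real.cos s • G) s :=
      (Real.hasDerivAt_sin s).smul_const G
    have hcos : HasDerivAt (fun u : ℝ => 1 - Real.cos u) (Real.sin s) s := by
      simpa using (Real.hasDerivAt_cos s).const_sub 1
    have hg : HasDerivAt (fun u : ℝ => (1 - Real.cos u) • (G * G)) (Real.sin s • (G * G)) s :=
      hcos.smul_const (G * G)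
    have := ((hasDerivAt_const s (1 : QMat n)).add hs).add hg
    simp at this; exact this
  set F : ℝ → QMat n := fun s => NormedSpace.exp (s • (-G)) * c s with hFdef
  have hkey : ∀ s : ℝ, (-G) * c s + (Real.cos s • G + Real.sin s • (G * G)) = 0 := by
    intro s
    rw [hcdef]
    simp only [mul_add, mul_one, mul_smul_comm, neg_mul, hG3', smul_neg, neg_neg]
    module
  have hF : ∀ s : ℝ, HasDerivAt F 0 s := by
    intro s
    have := (h3 s).mul (hc' s)
    have h0 : NormedSpace.exp (s • (-G)) * (-G) * c s +
        NormedSpace.exp (s • (-G)) * (Real.cos s • G + Real.sin s • (G * G)) = 0 := by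
      rw [mul_assoc, ← mul_add, hkey, mul_zero]
    rw [h0] at this
    exact this
  have hFconst : F θ = F 0 :=
    is_const_of_deriv_eq_zero (fun s => (hF s).differentiableAt)
      (fun s => (hF s).deriv) θ 0
  have hF0 : F 0 = 1 := by
    rw [hFdef]
    simp [hcdef, NormedSpace.exp_zero]
  have hcomm : Commute (θ • G) (θ • (-G)) :=
    (((Commute.refl G).neg_right).smul_left θ).smul_right θ
  have hinv : NormedSpace.exp (θ • G) * NormedSpace.exp (θ • (-G)) = 1 := by
    have he := NormedSpace.exp_add_of_commute_of_mem_ball (𝕂 := ℝ) hcomm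
      ((NormedSpace.expSeries_radius_eq_top ℝ (QMat n)).symm ▸ edist_lt_top _ _)
      ((NormedSpace.expSeries_radius_eq_top ℝ (QMat n)).symm ▸ edist_lt_top _ _)
    rw [smul_neg, add_neg_cancel,
      NormedSpace.exp_zero] at he
    rw [← smul_neg] at he
    exact he.symm
  calc NormedSpace.exp (θ • G)
      = NormedSpace.exp (θ • G) * F 0 := by rw [hF0, mul_one]
    _ = NormedSpace.exp (θ • G) * F θ := by rw [hFconst]
    _ = (NormedSpace.exp (θ • G) * NormedSpace.exp (θ • (-G))) * c θ := by
        rw [hFdef, mul_assoc]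
    _ = c θ := by rw [hinv, one_mul]

end ClosedForm


/-! ### Vanishing of the integral of an odd periodic function -/

lemma integral_Ico_eq_zero_of_odd_periodic (f : ℝ → ℂ) (hc : Continuous f)
    (hper : Function.Periodic f (2 * Real.pi)) (hodd : ∀ s, f (-s) = -f s) :
    ∫ s in Set.Ico (0 : ℝ) (2 * Real.pi), f s = 0 := by
  have h2pi : (0 : ℝ) < 2 * Real.pi := by positivity
  have hint : ∀ a b : ℝ, IntervalIntegrable f MeasureTheory.volume a b :=
    fun a b => hc.intervalIntegrable a b
  rw [MeasureTheory.setIntegral_congr_set MeasureTheory.Ico_ae_eq_Ioc,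
    ← intervalIntegral.integral_of_le h2pi.le]
  have h1 : ∫ s in (0:ℝ)..(2 * Real.pi), f s = ∫ s in (-Real.pi)..Real.pi, f s := by
    have := hper.intervalIntegral_add_eq 0 (-Real.pi)
    rw [zero_add] at this
    rw [this]
    congr 1
    ring
  rw [h1, ← intervalIntegral.integral_add_adjacent_intervals (hint (-Real.pi) 0)
    (hint 0 Real.pi)]
  have h2 : ∫ s in (-Real.pi)..(0:ℝ), f s = - ∫ s in (0:ℝ)..Real.pi, f s := by
    have h3 : ∫ s in (0:ℝ)..Real.pi, f (-s) = ∫ s in (-Real.pi)..(0:ℝ), f s := by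
      simpa using intervalIntegral.integral_comp_neg (a := (0:ℝ)) (b := Real.pi) f
    rw [← h3]
    have : ∀ s, f (-s) = -f s := hodd
    simp only [this]
    rw [intervalIntegral.integral_neg]
  rw [h2]
  ring


lemma prod_sign_pm {m : ℕ} (g : Fin m → ℂ) (h : ∀ j, g j = 1 ∨ g j = -1) :
    (∏ j, g j) = 1 ∨ (∏ j, g j) = -1 :=
  Finset.prod_induction g (fun z => z = 1 ∨ z = -1)
    (by rintro a b (rfl | rfl) (rfl | rfl) <;> simp) (Or.inl rfl) (fun j _ => h j)

/-- The `t`-th moment superoperator of any (qubit) excitation rotation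
commutes with `Z_p^{⊗2t}`. -/
theorem momentSOp_comm_ZpPow
    (n t : ℕ) (ht : 0 < t) (R : ℝ → QMat n) (hR : IsExcRotation R) (p : Fin n) :
    momentSOp t R * ZpPow t p = ZpPow t p * momentSOp t R := by
  obtain ⟨τ, ⟨r, c, d, hr, hinj, hτc⟩, hRdef⟩ := hR
  obtain ⟨hspp, hsq, hff⟩ := exc_facts hr hinj hτc
  have hG3 := G_cube hspp hsq
  set G : QMat n := τ - τᴴ with hGdef
  have hclosed : ∀ θ : ℝ, R θ = 1 + Real.sin θ • G + (1 - Real.cos θ) • (G * G) := fun θ => by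
    rw [hRdef, excRot]; exact exp_closed_form G hG3 θ
  have hsub : ∀ a b, G a b ≠ 0 → τ a b ≠ 0 ∨ τᴴ a b ≠ 0 := by
    intro a b hG
    by_contra hcon
    push_neg at hcon
    exact hG (by rw [hGdef, Matrix.sub_apply, hcon.1, hcon.2, sub_zero])
  have hGff : (∀ a b, G a b ≠ 0 → a p = b p) ∨ (∀ a b, G a b ≠ 0 → a p ≠ b p) := by
    rcases hff p with h | h
    · left; intro a b hab
      rcases hsub a b hab with h1 | h1
      exacts [h a b h1, h.conjTranspose a b h1]
    · right; intro a b hab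
      rcases hsub a b hab with h1 | h1
      exacts [h a b h1, h.conjTranspose a b h1]
  ext x y
  simp only [ZpPow, Matrix.mul_diagonal, Matrix.diagonal_mul]
  by_cases hD : (∏ j : Fin (2*t), if y j p = 1 then (-1:ℂ) else 1)
      = (∏ j : Fin (2*t), if x j p = 1 then (-1:ℂ) else 1)
  · rw [hD]; ring
  · suffices h0 : momentSOp t R x y = 0 by rw [h0, zero_mul, mul_zero]
    rw [momentSOp]
    refine mul_eq_zero_of_right _ ?_
    rcases hGff with hfix | hflip
    · -- Fix case: the integrand vanishes pointwise
      have hR0 : ∀ (θ : ℝ) a b, a p ≠ b p → R θ a b = 0 := by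
        intro θ a b hab
        have h1 : (1 : QMat n) a b = 0 := Matrix.one_apply_ne (fun h => hab (by rw [h]))
        have h2 : G a b = 0 := by
          by_contra h
          exact hab (hfix a b h)
        have h3 : (G * G) a b = 0 := by
          rw [Matrix.mul_apply]
          refine Finset.sum_eq_zero fun u _ => ?_
          by_cases hu : G a u = 0
          · rw [hu, zero_mul]
          by_cases hub : G u b = 0
          · rw [hub, mul_zero]
          exact absurd ((hfix a u hu).trans (hfix u b hub)) hab
        rw [hclosed θ]
        simp [Matrix.add_apply, Matrix.smul_apply, h1, h2, h3]
      obtain ⟨j, hj⟩ : ∃ j : Fin (2*t), x j p ≠ y j p := by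
        by_contra hcon
        push_neg at hcon
        exact hD (Finset.prod_congr rfl fun j _ => by rw [hcon j]).symm
      have hzero : ∀ θ : ℝ, momentKron t (R θ) x y = 0 := by
        intro θ
        rw [momentKron]
        refine Finset.prod_eq_zero (Finset.mem_univ j) ?_
        by_cases hjt : (j : ℕ) < t
        · rw [if_pos hjt, hR0 θ _ _ hj]
        · rw [if_neg hjt, hR0 θ _ _ hj, star_zero]
      simp only [hzero, MeasureTheory.integral_zero]
    · -- Flip case: the integrand is odd and periodic
      have hsgn1 : ∀ a b : Fin 2, a = b →
          (if a = 1 then (-1:ℂ) else 1) * (if b = 1 then -1 else 1) = 1 := by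
        intro a b h
        subst h
        by_cases h : a = 1 <;> simp [h]
      have hsgn2 : ∀ a b : Fin 2, a ≠ b →
          (if a = 1 then (-1:ℂ) else 1) * (if b = 1 then -1 else 1) = -1 := by
        intro a b h
        fin_cases a <;> fin_cases b <;> simp_all
      have hG2 : ∀ a b, a p ≠ b p → (G * G) a b = 0 := by
        intro a b hab
        rw [Matrix.mul_apply]
        refine Finset.sum_eq_zero fun u _ => ?_
        by_cases hu : G a u = 0
        · rw [hu, zero_mul]
        by_cases hub : G u b = 0
        · rw [hub, mul_zero]
        exact absurd (fin2_trans (hflip a u hu) (hflip u b hub)) hab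
      have hRodd : ∀ (θ : ℝ) a b, R (-θ) a b =
          ((if a p = 1 then (-1:ℂ) else 1) * (if b p = 1 then -1 else 1)) * R θ a b := by
        intro θ a b
        by_cases hab : a p = b p
        · rw [hsgn1 _ _ hab, one_mul, hclosed, hclosed]
          have h2 : G a b = 0 := by
            by_contra h
            exact hflip a b h hab
          simp [Matrix.add_apply, Matrix.smul_apply, h2, Real.cos_neg]
        · rw [hsgn2 _ _ hab, hclosed, hclosed]
          have h1 : (1 : QMat n) a b = 0 := Matrix.one_apply_ne (fun h => hab (by rw [h]))
          simp only [Matrix.add_apply, Matrix.smul_apply, h1, hG2 a b hab,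
            Real.sin_neg, Real.cos_neg, smul_zero, add_zero, zero_add, neg_smul]
          rw [neg_one_mul, Matrix.neg_apply, Matrix.smul_apply]
      have hstar : ∀ v : Fin 2, star (if v = 1 then (-1:ℂ) else 1)
          = (if v = 1 then (-1:ℂ) else 1) := by
        intro v
        by_cases h : v = 1 <;> simp [h]
      set f : ℝ → ℂ := fun θ => momentKron t (R θ) x y with hfdef
      have hfprod : ∀ θ : ℝ, f θ = ∏ j : Fin (2*t),
          (if (j : ℕ) < t then R θ (x j) (y j) else star (R θ (x j) (y j))) := fun θ => rfl
      have hprodsgn : ((∏ j : Fin (2*t), (if x j p = 1 then (-1:ℂ) else 1)) *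
          ∏ j : Fin (2*t), (if y j p = 1 then (-1:ℂ) else 1)) = -1 := by
        rcases prod_sign_pm (fun j : Fin (2*t) => if x j p = 1 then (-1:ℂ) else 1)
            (fun j => by by_cases h : x j p = 1 <;> simp [h]) with h1 | h1 <;>
          rcases prod_sign_pm (fun j : Fin (2*t) => if y j p = 1 then (-1:ℂ) else 1)
            (fun j => by by_cases h : y j p = 1 <;> simp [h]) with h2 | h2 <;>
          rw [h1, h2] at hD ⊢ <;> first | (exact absurd rfl hD) | ring
      have hfodd : ∀ θ, f (-θ) = -f θ := by
        intro θ
        have hterm : ∀ j : Fin (2*t),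
            (if (j : ℕ) < t then R (-θ) (x j) (y j) else star (R (-θ) (x j) (y j))) =
            ((if x j p = 1 then (-1:ℂ) else 1) * (if y j p = 1 then (-1:ℂ) else 1)) *
            (if (j : ℕ) < t then R θ (x j) (y j) else star (R θ (x j) (y j))) := by
          intro j
          by_cases hjt : (j : ℕ) < t
          · rw [if_pos hjt, if_pos hjt, hRodd]
          · rw [if_neg hjt, if_neg hjt, hRodd, star_mul', star_mul', hstar, hstar]
            all_goals ring
        rw [hfprod, hfprod, Finset.prod_congr rfl (fun j _ => hterm j),
          Finset.prod_mul_distrib, Finset.prod_mul_distrib, hprodsgn]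
        ring
      have hfper : Function.Periodic f (2 * Real.pi) := by
        intro θ
        have hRper : R (θ + 2 * Real.pi) = R θ := by
          rw [hclosed, hclosed, Real.sin_periodic θ, Real.cos_periodic θ]
        show momentKron t (R (θ + 2 * Real.pi)) x y = momentKron t (R θ) x y
        rw [hRper]
      have hCont : ∀ a b, Continuous fun θ : ℝ => R θ a b := by
        intro a b
        have : (fun θ : ℝ => R θ a b) = fun θ : ℝ => (1 : QMat n) a b +
            Real.sin θ • G a b + (1 - Real.cos θ) • (G * G) a b := funext fun θ => by
          rw [hclosed θ]
          simp [Matrix.add_apply, Matrix.smul_apply]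
        rw [this]
        fun_prop
      have hfcont : Continuous f := by
        have : f = fun θ : ℝ => ∏ j : Fin (2*t),
            (if (j : ℕ) < t then R θ (x j) (y j) else star (R θ (x j) (y j))) :=
          funext hfprod
        rw [this]
        refine continuous_finset_prod _ fun j _ => ?_
        by_cases hjt : (j : ℕ) < t
        · simpa only [if_pos hjt] using hCont (x j) (y j)
        · simpa only [if_neg hjt] using (hCont (x j) (y j)).star
      exact integral_Ico_eq_zero_of_odd_periodic f hfcont hfper hfodd

end DUCC
end
end
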